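/- arXiv:1002.2479 — 7 statements merged into one kernel-verified Lean document; each statement's English description precedes it below -/
import Mathlib

section
/- Let T = R_U T_{(τ,t)} and S = R_V T_{(σ,s)} with U, V ∈ U(n−1), τ, σ ∈ ℂ^{n−1}, t, s ∈ ℝ. Then ST = TS if and only if UV = VU and (Vᴴτ, t)·(σ, s) = (Uᴴσ, s)·(τ, t) in the Heisenberg group; explicitly, if and only if UV = VU, Vᴴτ + σ = Uᴴσ + τ, and Im(σᴴVᴴτ) = Im(τᴴUᴴσ). -/
open Matrix Complex

/-- Index type for block matrices with blocks of sizes `1, m, 1` (so `m = n - 1`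
and the total size is `n + 1`). -/
abbrev Idx (m : ℕ) : Type := Unit ⊕ (Fin m ⊕ Unit)

/-- The Heisenberg rotation `R_U = diag(1, U, 1)`. -/
noncomputable def RU {m : ℕ} (U : Matrix (Fin m) (Fin m) ℂ) : Matrix (Idx m) (Idx m) ℂ :=
  Matrix.of fun i j =>
    match i, j with
    | Sum.inl _, Sum.inl _ => 1
    | Sum.inr (Sum.inl k), Sum.inr (Sum.inl l) => U k l
    | Sum.inr (Sum.inr _), Sum.inr (Sum.inr _) => 1
    | _, _ => 0

/-- The Heisenberg translation
`T_{(τ,t)} = [[1, −τᴴ, (−|τ|²+it)/2], [0, I, τ], [0, 0, 1]]`. -/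
noncomputable def Htr {m : ℕ} (τ : Fin m → ℂ) (t : ℝ) : Matrix (Idx m) (Idx m) ℂ :=
  Matrix.of fun i j =>
    match i, j with
    | Sum.inl _, Sum.inl _ => 1
    | Sum.inl _, Sum.inr (Sum.inl l) => -((starRingEnd ℂ) (τ l))
    | Sum.inl _, Sum.inr (Sum.inr _) =>
        (-(((∑ k, Complex.normSq (τ k) : ℝ)) : ℂ) + (t : ℂ) * Complex.I) / 2
    | Sum.inr (Sum.inl k), Sum.inr (Sum.inl l) => if k = l then 1 else 0
    | Sum.inr (Sum.inl k), Sum.inr (Sum.inr _) => τ k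
    | Sum.inr (Sum.inr _), Sum.inr (Sum.inr _) => 1
    | _, _ => 0

/-- The Heisenberg dilation `D_r = diag(r, I, 1/r)`. -/
noncomputable def Dil {m : ℕ} (r : ℝ) : Matrix (Idx m) (Idx m) ℂ :=
  Matrix.of fun i j =>
    match i, j with
    | Sum.inl _, Sum.inl _ => (r : ℂ)
    | Sum.inr (Sum.inl k), Sum.inr (Sum.inl l) => if k = l then 1 else 0
    | Sum.inr (Sum.inr _), Sum.inr (Sum.inr _) => ((r : ℂ))⁻¹
    | _, _ => 0

/-- The block diagonal matrix `diag(μ, A, λ)`. -/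
noncomputable def diagM {m : ℕ} (μ : ℂ) (A : Matrix (Fin m) (Fin m) ℂ) (lam : ℂ) :
    Matrix (Idx m) (Idx m) ℂ :=
  Matrix.of fun i j =>
    match i, j with
    | Sum.inl _, Sum.inl _ => μ
    | Sum.inr (Sum.inl k), Sum.inr (Sum.inl l) => A k l
    | Sum.inr (Sum.inr _), Sum.inr (Sum.inr _) => lam
    | _, _ => 0

/-- The matrix `J = [[0,0,1],[0,I,0],[1,0,0]]` of the second Hermitian form. -/
noncomputable def Jm (m : ℕ) : Matrix (Idx m) (Idx m) ℂ :=
  Matrix.of fun i j =>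
    match i, j with
    | Sum.inl _, Sum.inr (Sum.inr _) => 1
    | Sum.inr (Sum.inr _), Sum.inl _ => 1
    | Sum.inr (Sum.inl k), Sum.inr (Sum.inl l) => if k = l then 1 else 0
    | _, _ => 0

/-- The second Hermitian form `⟨z,w⟩ = wᴴ J z` of signature `(n,1)`. -/
noncomputable def hermJ {m : ℕ} (z w : Idx m → ℂ) : ℂ :=
  dotProduct (star w) ((Jm m).mulVec z)

/-- Membership in `U(n,1)` for the second Hermitian form: `g ∈ GL` and `gᴴ J g = J`. -/
def InU2 {m : ℕ} (g : Matrix (Idx m) (Idx m) ℂ) : Prop :=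
  IsUnit g ∧ gᴴ * Jm m * g = Jm m

/-- The vector `e₁ = (1,0,…,0)ᵗ` (representing the boundary point `∞`). -/
noncomputable def e1 (m : ℕ) : Idx m → ℂ := fun i =>
  match i with
  | Sum.inl _ => 1
  | _ => 0

/-- The vector `e_{n+1} = (0,…,0,1)ᵗ` (representing the boundary point `o`). -/
noncomputable def elast (m : ℕ) : Idx m → ℂ := fun i =>
  match i with
  | Sum.inr (Sum.inr _) => 1
  | _ => 0

/-- `dotc x y = xᴴ y = ∑ conj(xₖ) yₖ`. -/
noncomputable def dotc {m : ℕ} (x y : Fin m → ℂ) : ℂ :=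
  ∑ k, (starRingEnd ℂ) (x k) * y k

/-- A matrix is diagonalizable if it is conjugate (in `GL`) to a diagonal matrix. -/
def IsDiagonalizable {N : Type*} [Fintype N] [DecidableEq N] (A : Matrix N N ℂ) : Prop :=
  ∃ P : Matrix N N ℂ, IsUnit P.det ∧ (P⁻¹ * A * P).IsDiag

/-! `R_U T_{(τ,t)}` is the block matrix `[[1, -τᴴ, c], [0, U, Uτ], [0, 0, 1]]`, and such
matrices multiply blockwise, so `ST = TS` splits into four block equations: `VU = UV`,
`τ + Uᴴσ = σ + Vᴴτ` (top row), `σᴴUτ = τᴴVσ` (corner) and the right column, which follows from the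
first two after applying `VU` to the second. The corner equation is equivalent to
`σᴴVᴴτ = τᴴUᴴσ`, and its real part is automatic: comparing squared norms of the two sides of
`Vᴴτ + σ = Uᴴσ + τ` gives `Re(σᴴVᴴτ) = Re(τᴴUᴴσ)` because `U` and `V` are unitary. -/

section BlockUpper

variable {α n : Type*}

def blockUpper [Zero α] [One α] (a : n → α) (A : Matrix n n α) (b : n → α) (c : α) :
    Matrix (Unit ⊕ (n ⊕ Unit)) (Unit ⊕ (n ⊕ Unit)) α :=
  Matrix.of fun i j =>
    match i, j with
    | .inl _, .inl _ => 1
    | .inl _, .inr (.inl l) => a l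
    | .inl _, .inr (.inr _) => c
    | .inr (.inl k), .inr (.inl l) => A k l
    | .inr (.inl k), .inr (.inr _) => b k
    | .inr (.inr _), .inr (.inr _) => 1
    | _, _ => 0

theorem blockUpper_mul [Fintype n] [Semiring α] (a a' : n → α) (A A' : Matrix n n α)
    (b b' : n → α) (c c' : α) :
    blockUpper a A b c * blockUpper a' A' b' c' =
      blockUpper (a' + a ᵥ* A') (A * A') (A *ᵥ b' + b) (c' + a ⬝ᵥ b' + c) := by
  ext (_ | i | _) (_ | j | _) <;>
    simp [blockUpper, mul_apply, Fintype.sum_sum_type, vecMul, mulVec, dotProduct, add_assoc]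

theorem blockUpper_inj [Zero α] [One α] {a a' : n → α} {A A' : Matrix n n α}
    {b b' : n → α} {c c' : α} :
    blockUpper a A b c = blockUpper a' A' b' c' ↔ a = a' ∧ A = A' ∧ b = b' ∧ c = c' := by
  refine ⟨fun h => ⟨?_, ?_, ?_, ?_⟩, by rintro ⟨rfl, rfl, rfl, rfl⟩; rfl⟩
  · ext l; simpa [blockUpper] using congr_fun₂ h (.inl ()) (.inr (.inl l))
  · ext k l; simpa [blockUpper] using congr_fun₂ h (.inr (.inl k)) (.inr (.inl l))
  · ext k; simpa [blockUpper] using congr_fun₂ h (.inr (.inl k)) (.inr (.inr ()))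
  · simpa [blockUpper] using congr_fun₂ h (.inl ()) (.inr (.inr ()))

end BlockUpper

section StarDotProduct

variable {α n : Type*} [Fintype n] [CommSemiring α] [StarRing α]

theorem star_dotProduct_conjTranspose_mulVec (A : Matrix n n α) (x y : n → α) :
    star x ⬝ᵥ Aᴴ *ᵥ y = star (star y ⬝ᵥ A *ᵥ x) := by
  rw [star_dotProduct, star_mulVec, dotProduct_mulVec, conjTranspose_conjTranspose]

theorem star_dotProduct_conjTranspose_mulVec_self [DecidableEq n] {A : Matrix n n α}
    (hA : A * Aᴴ = 1) (x : n → α) : star (Aᴴ *ᵥ x) ⬝ᵥ Aᴴ *ᵥ x = star x ⬝ᵥ x := by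
  rw [star_mulVec, conjTranspose_conjTranspose, ← dotProduct_mulVec, mulVec_mulVec, hA,
    one_mulVec]

theorem star_add_star_vecMul_eq_iff (A B : Matrix n n α) (x y : n → α) :
    star x + star y ᵥ* A = star y + star x ᵥ* B ↔ Bᴴ *ᵥ x + y = Aᴴ *ᵥ y + x := by
  rw [← conjTranspose_conjTranspose A, ← conjTranspose_conjTranspose B, ← star_mulVec,
    ← star_mulVec, ← star_add, ← star_add, star_inj, conjTranspose_conjTranspose,
    conjTranspose_conjTranspose, add_comm x, add_comm y, eq_comm]

end StarDotProduct

theorem re_star_dotProduct_conjTranspose_mulVec_eq_of_add_eq {n : Type*} [Fintype n]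
    [DecidableEq n] {A B : Matrix n n ℂ} (hA : A * Aᴴ = 1) (hB : B * Bᴴ = 1) {x y : n → ℂ}
    (h : Aᴴ *ᵥ x + y = Bᴴ *ᵥ y + x) :
    (star y ⬝ᵥ Aᴴ *ᵥ x).re = (star x ⬝ᵥ Bᴴ *ᵥ y).re := by
  have hnorm := congr_arg (fun v => (star v ⬝ᵥ v).re) h
  simp only [star_add, add_dotProduct, dotProduct_add,
    star_dotProduct_conjTranspose_mulVec_self hA,
    star_dotProduct_conjTranspose_mulVec_self hB, add_re] at hnorm
  rw [star_dotProduct (Aᴴ *ᵥ x), star_dotProduct (Bᴴ *ᵥ y)] at hnorm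
  simp only [Complex.star_def, conj_re] at hnorm
  linarith

theorem mulVec_mulVec_add_eq_of_add_eq {α n : Type*} [Fintype n] [DecidableEq n] [CommRing α]
    {A A' B B' : Matrix n n α} (hAB : A * B = B * A) (hA : A * A' = 1) (hB : B * B' = 1)
    {x y : n → α} (h : B' *ᵥ x + y = A' *ᵥ y + x) :
    B *ᵥ A *ᵥ x + B *ᵥ y = A *ᵥ B *ᵥ y + A *ᵥ x := by
  have hBAB' : B * A * B' = A := by rw [← hAB, mul_assoc, hB, mul_one]
  have hBAA' : B * A * A' = B := by rw [mul_assoc, hA, mul_one]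
  have h' := congr_arg ((B * A) *ᵥ ·) h
  simp only [mulVec_add, mulVec_mulVec, hBAB', hBAA'] at h' ⊢
  rw [hAB]
  linear_combination -h'

theorem RU_mul_Htr {m : ℕ} (U : Matrix (Fin m) (Fin m) ℂ) (τ : Fin m → ℂ) (t : ℝ) :
    RU U * Htr τ t = blockUpper (-star τ) U (U *ᵥ τ)
      ((-(((∑ k, Complex.normSq (τ k) : ℝ)) : ℂ) + (t : ℂ) * Complex.I) / 2) := by
  ext (_ | i | _) (_ | j | _) <;>
    simp [RU, Htr, blockUpper, mul_apply, Fintype.sum_sum_type, mulVec, dotProduct]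

theorem dotc_eq_star_dotProduct {m : ℕ} (x y : Fin m → ℂ) : dotc x y = star x ⬝ᵥ y := rfl

theorem heisenberg_isometries_commute_iff_general {m : ℕ}
    (U V : Matrix (Fin m) (Fin m) ℂ)
    (hU : U ∈ Matrix.unitaryGroup (Fin m) ℂ) (hV : V ∈ Matrix.unitaryGroup (Fin m) ℂ)
    (τ σ : Fin m → ℂ) (t s : ℝ) :
    (RU V * Htr σ s) * (RU U * Htr τ t) = (RU U * Htr τ t) * (RU V * Htr σ s) ↔
      (U * V = V * U ∧ Vᴴ.mulVec τ + σ = Uᴴ.mulVec σ + τ ∧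
        (dotc σ (Vᴴ.mulVec τ)).im = (dotc τ (Uᴴ.mulVec σ)).im) := by
  rw [RU_mul_Htr, RU_mul_Htr, blockUpper_mul, blockUpper_mul, blockUpper_inj,
    neg_vecMul, neg_vecMul, ← neg_add, ← neg_add, neg_inj, star_add_star_vecMul_eq_iff,
    neg_dotProduct, neg_dotProduct, dotc_eq_star_dotProduct, dotc_eq_star_dotProduct]
  have hUU : U * Uᴴ = 1 := mem_unitaryGroup_iff.mp hU
  have hVV : V * Vᴴ = 1 := mem_unitaryGroup_iff.mp hV
  have hcorner (c c' : ℂ) : c' + -(star σ ⬝ᵥ U *ᵥ τ) + c = c + -(star τ ⬝ᵥ V *ᵥ σ) + c' ↔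
      star σ ⬝ᵥ Vᴴ *ᵥ τ = star τ ⬝ᵥ Uᴴ *ᵥ σ := by
    rw [star_dotProduct_conjTranspose_mulVec, star_dotProduct_conjTranspose_mulVec, star_inj]
    constructor <;> intro h <;> linear_combination h
  rw [hcorner]
  constructor
  · rintro ⟨hvec, hcomm, -, hdot⟩
    exact ⟨hcomm.symm, hvec, congr_arg Complex.im hdot⟩
  · rintro ⟨hcomm, hvec, him⟩
    refine ⟨hvec, hcomm.symm, mulVec_mulVec_add_eq_of_add_eq hcomm hUU hVV hvec,
      Complex.ext ?_ him⟩
    exact re_star_dotProduct_conjTranspose_mulVec_eq_of_add_eq hVV hUU hvec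

theorem heisenberg_isometries_commute_iff {m : ℕ} (hm : 1 ≤ m)
    (U V : Matrix (Fin m) (Fin m) ℂ)
    (hU : U ∈ Matrix.unitaryGroup (Fin m) ℂ) (hV : V ∈ Matrix.unitaryGroup (Fin m) ℂ)
    (τ σ : Fin m → ℂ) (t s : ℝ) :
    (RU V * Htr σ s) * (RU U * Htr τ t) = (RU U * Htr τ t) * (RU V * Htr σ s) ↔
      (U * V = V * U ∧ Vᴴ.mulVec τ + σ = Uᴴ.mulVec σ + τ ∧
        (dotc σ (Vᴴ.mulVec τ)).im = (dotc τ (Uᴴ.mulVec σ)).im) :=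
  heisenberg_isometries_commute_iff_general U V hU hV τ σ t s
end

section
/- Let U ∈ U(n−1), τ ∈ ℂ^{n−1}, t ∈ ℝ with Uτ = τ and (τ, t) ≠ (0, 0). Then the matrix T = R_U T_{(τ,t)} has no eigenvector v ∈ ℂ^{n+1} with ⟨v,v⟩ = vᴴJv < 0 (so T has no fixed point in complex hyperbolic space, i.e. T is not elliptic); moreover, T is not diagonalizable. -/
open Matrix Complex

/-!
Write `T = R_U T_{(τ,t)}` and let `v = (a, w, c)` be an eigenvector with eigenvalue `λ`. The last
row of `T` is `(0, 0, 1)`, so if `c ≠ 0` then `λ = 1`, and the middle rows read `U (w + c τ) = w`.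
Since `U` is unitary and fixes `τ`, pairing with `τ` gives `c ‖τ‖² = 0`, so `τ = 0`; the first row
then reads `a + (i t / 2) c = a`, so `t = 0`. Hence every eigenvector has `c = 0`, and there the
form `⟨v, v⟩ = 2 Re(c̄ a) + ‖w‖²` is nonnegative. A diagonalizing matrix would have
eigenvectors as columns, hence a zero last row.
-/

theorem Matrix.mulVec_column_eq_smul_of_isDiag_conj {N : Type*} [Fintype N] [DecidableEq N]
    {A P : Matrix N N ℂ} (hP : IsUnit P.det) (hD : (P⁻¹ * A * P).IsDiag) (j : N) :
    A *ᵥ (fun i => P i j) = (P⁻¹ * A * P) j j • fun i => P i j := by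
  have hAP : A * P = P * diagonal (diag (P⁻¹ * A * P)) := by
    rw [hD.diagonal_diag, ← Matrix.mul_assoc, ← Matrix.mul_assoc, mul_nonsing_inv P hP,
      Matrix.one_mul]
  funext i
  have h := congrFun (congrFun hAP i) j
  rw [mul_diagonal] at h
  simpa [mulVec, dotProduct, mul_apply, mul_comm] using h

theorem not_isDiagonalizable_of_eigenvector_apply_eq_zero {N : Type*} [Fintype N]
    [DecidableEq N] {A : Matrix N N ℂ} (i : N)
    (h : ∀ (lam : ℂ) (v : N → ℂ), A *ᵥ v = lam • v → v i = 0) :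
    ¬ IsDiagonalizable A := by
  rintro ⟨P, hP, hD⟩
  have hrow : ∀ j, P i j = 0 := fun j => h _ _ (mulVec_column_eq_smul_of_isDiag_conj hP hD j)
  exact hP.ne_zero (det_eq_zero_of_row_eq_zero i hrow)

theorem Matrix.star_dotProduct_mulVec_of_mulVec_eq_self {n α : Type*} [Fintype n]
    [DecidableEq n] [CommRing α] [StarRing α] {U : Matrix n n α}
    (hU : U ∈ unitaryGroup n α) {τ : n → α} (hτ : U *ᵥ τ = τ) (x : n → α) :
    star τ ⬝ᵥ U *ᵥ x = star τ ⬝ᵥ x := by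
  conv_lhs => rw [← hτ]
  rw [star_mulVec, dotProduct_mulVec, vecMul_vecMul, ← star_eq_conjTranspose,
    mem_unitaryGroup_iff'.mp hU, vecMul_one]

section Heisenberg

variable {m : ℕ} (U : Matrix (Fin m) (Fin m) ℂ) (τ : Fin m → ℂ) (t : ℝ) (v : Idx m → ℂ)

theorem RU_mul_Htr_mulVec_inl :
    ((RU U * Htr τ t) *ᵥ v) (Sum.inl ()) = v (Sum.inl ())
      - star τ ⬝ᵥ (fun k => v (Sum.inr (Sum.inl k)))
      + (-((∑ k, normSq (τ k) : ℝ) : ℂ) + (t : ℂ) * I) / 2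
        * v (Sum.inr (Sum.inr ())) := by
  rw [← mulVec_mulVec]
  simp [mulVec, dotProduct, Fintype.sum_sum_type, RU, Htr, sub_eq_add_neg, add_assoc]

theorem RU_mul_Htr_mulVec_inr_inl :
    (fun k => ((RU U * Htr τ t) *ᵥ v) (Sum.inr (Sum.inl k))) =
      U *ᵥ ((fun k => v (Sum.inr (Sum.inl k))) + v (Sum.inr (Sum.inr ())) • τ) := by
  funext k
  rw [← mulVec_mulVec]
  simp [mulVec, dotProduct, Fintype.sum_sum_type, RU, Htr, mul_comm (τ _)]

theorem RU_mul_Htr_mulVec_inr_inr :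
    ((RU U * Htr τ t) *ᵥ v) (Sum.inr (Sum.inr ())) = v (Sum.inr (Sum.inr ())) := by
  rw [← mulVec_mulVec]
  simp [mulVec, dotProduct, Fintype.sum_sum_type, RU, Htr]

end Heisenberg

theorem RU_mul_Htr_eigenvector_apply_inr_inr_eq_zero {m : ℕ} {U : Matrix (Fin m) (Fin m) ℂ}
    (hU : U ∈ unitaryGroup (Fin m) ℂ) {τ : Fin m → ℂ} {t : ℝ} (hτ : U *ᵥ τ = τ)
    (hne : ¬(τ = 0 ∧ t = 0)) {lam : ℂ} {v : Idx m → ℂ}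
    (hv : (RU U * Htr τ t) *ᵥ v = lam • v) :
    v (Sum.inr (Sum.inr ())) = 0 := by
  by_contra hc
  set c := v (Sum.inr (Sum.inr ()))
  set w : Fin m → ℂ := fun k => v (Sum.inr (Sum.inl k))
  have hlam : lam = 1 := by
    have h := congrFun hv (Sum.inr (Sum.inr ()))
    rw [RU_mul_Htr_mulVec_inr_inr, Pi.smul_apply, smul_eq_mul] at h
    exact (mul_eq_right₀ hc).mp h.symm
  have hmid : U *ᵥ (w + c • τ) = w := by
    rw [← RU_mul_Htr_mulVec_inr_inl U τ t, hv, hlam, one_smul]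
  have hτ0 : τ = 0 := by
    have h := star_dotProduct_mulVec_of_mulVec_eq_self hU hτ (w + c • τ)
    rw [hmid, dotProduct_add, dotProduct_smul, smul_eq_mul, left_eq_add,
      mul_eq_zero] at h
    open scoped ComplexOrder in
    exact dotProduct_star_self_eq_zero.mp (h.resolve_left hc)
  have ht0 : t = 0 := by
    have h := congrFun hv (Sum.inl ())
    rw [RU_mul_Htr_mulVec_inl, hlam, one_smul] at h
    have h' : t = 0 ∨ c = 0 := by simpa [hτ0] using h
    exact h'.resolve_right hc
  exact hne ⟨hτ0, ht0⟩

theorem re_hermJ_self_nonneg_of_apply_inr_inr_eq_zero {m : ℕ} {v : Idx m → ℂ}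
    (hv : v (Sum.inr (Sum.inr ())) = 0) : 0 ≤ (hermJ v v).re := by
  simpa [hermJ, mulVec, dotProduct, Fintype.sum_sum_type, Jm, hv, ← normSq_apply] using
    Finset.sum_nonneg fun k (_ : k ∈ Finset.univ) => normSq_nonneg (v (Sum.inr (Sum.inl k)))

theorem screw_parabolic_is_parabolic_general {m : ℕ}
    (U : Matrix (Fin m) (Fin m) ℂ) (hU : U ∈ Matrix.unitaryGroup (Fin m) ℂ)
    (τ : Fin m → ℂ) (t : ℝ) (hτ : U.mulVec τ = τ) (hne : ¬(τ = 0 ∧ t = 0)) :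
    (¬ ∃ (lam : ℂ) (v : Idx m → ℂ),
        (RU U * Htr τ t).mulVec v = lam • v ∧ (hermJ v v).re < 0) ∧
    ¬ IsDiagonalizable (RU U * Htr τ t) := by
  have hlast := fun lam v (hv : (RU U * Htr τ t) *ᵥ v = lam • v) =>
    RU_mul_Htr_eigenvector_apply_inr_inr_eq_zero hU hτ hne hv
  refine ⟨fun ⟨lam, v, hv, hneg⟩ => ?_,
    not_isDiagonalizable_of_eigenvector_apply_eq_zero _ hlast⟩
  exact hneg.not_ge (re_hermJ_self_nonneg_of_apply_inr_inr_eq_zero (hlast lam v hv))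

theorem screw_parabolic_is_parabolic {m : ℕ} (hm : 1 ≤ m)
    (U : Matrix (Fin m) (Fin m) ℂ) (hU : U ∈ Matrix.unitaryGroup (Fin m) ℂ)
    (τ : Fin m → ℂ) (t : ℝ) (hτ : U.mulVec τ = τ) (hne : ¬(τ = 0 ∧ t = 0)) :
    (¬ ∃ (lam : ℂ) (v : Idx m → ℂ),
        (RU U * Htr τ t).mulVec v = lam • v ∧ (hermJ v v).re < 0) ∧
    ¬ IsDiagonalizable (RU U * Htr τ t) :=
  screw_parabolic_is_parabolic_general U hU τ t hτ hne
end

section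
/- Let T ∈ U(n,1) be parabolic, i.e. not diagonalizable, and let S ∈ U(n,1) commute with T. Then every eigenvalue of S has modulus 1 (in particular, S is not hyperbolic). -/
open Matrix Complex

/-- The first Hermitian form `⟨z,w⟩ = −w̄₀z₀ + ∑_{i=1}^{n} w̄ᵢzᵢ` of signature `(n,1)`
on `ℂ^{n+1}`. -/
noncomputable def herm (n : ℕ) (z w : Fin (n + 1) → ℂ) : ℂ :=
  -((starRingEnd ℂ) (w 0) * z 0) + ∑ i : Fin n, (starRingEnd ℂ) (w i.succ) * z i.succ

/-- Membership in `U(n,1)`: `g ∈ GL(n+1,ℂ)` and `g` preserves the Hermitian form. -/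
def InU1 (n : ℕ) (g : Matrix (Fin (n + 1)) (Fin (n + 1)) ℂ) : Prop :=
  IsUnit g ∧ ∀ z w : Fin (n + 1) → ℂ, herm n (g.mulVec z) (g.mulVec w) = herm n z w

/-!
Suppose `S v = λ v` with `v ≠ 0` and `|λ| ≠ 1`. Then `v` is null, and since
`⟨S z, v⟩ = ⟨z, v⟩ / conj λ` the functional `⟨·, v⟩` is a left eigenvector of `S`, so `S` also has
a null eigenvector `v₂` with eigenvalue `1 / conj λ`, and `⟨v₂, v⟩ ≠ 0`. In signature `(n,1)` two
mutually orthogonal null vectors are proportional; hence these eigenspaces of `S` are lines, which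
the commuting `T` preserves. As `T` is not diagonalizable it has a Jordan chain `T x = μ x + y`,
`T y = μ y`, `y ≠ 0`, and for an isometry such a `y` is orthogonal to every eigenvector, itself
included. But a null vector orthogonal to both `v` and `v₂` vanishes.
-/

open ComplexConjugate

section Isometry

variable {M : Type*} [AddCommGroup M] [Module ℂ M]

theorem isometry_apply_eigenvectors_eq_zero (B : M →ₗ[ℂ] M →ₗ⋆[ℂ] ℂ) {g : M → M}
    (hg : ∀ x y, B (g x) (g y) = B x y) {u w : M} {ρ σ : ℂ} (hu : g u = ρ • u)
    (hw : g w = σ • w) (hρσ : ρ * conj σ ≠ 1) : B u w = 0 := by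
  have h := hg u w
  simp only [hu, hw, map_smulₛₗ, LinearMap.smul_apply, smul_eq_mul, RingHom.id_apply] at h
  have : (ρ * conj σ - 1) * B u w = 0 := by linear_combination h
  exact (mul_eq_zero.mp this).resolve_left (sub_ne_zero.mpr hρσ)

theorem isometry_apply_jordanChain_eq_zero (B : M →ₗ[ℂ] M →ₗ⋆[ℂ] ℂ) {g : M → M}
    (hg : ∀ x y, B (g x) (g y) = B x y) {x y w : M} {μ ρ : ℂ} (hx : g x = μ • x + y)
    (hy : g y = μ • y) (hw : g w = ρ • w) : B y w = 0 := by
  have hxw := hg x w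
  have hyw := hg y w
  simp only [hx, hy, hw, map_add, LinearMap.add_apply, map_smulₛₗ, LinearMap.smul_apply,
    smul_eq_mul, RingHom.id_apply] at hxw hyw
  by_contra hB
  have hρμ : conj ρ * μ = 1 := mul_right_cancel₀ hB (by linear_combination hyw)
  have hρ : conj ρ * B y w = 0 := by linear_combination hxw - B x w * hρμ
  exact hB ((mul_eq_zero.mp hρ).resolve_left (left_ne_zero_of_mul_eq_one hρμ))

end Isometry

theorem Matrix.exists_mulVec_eq_smul_of_dotProduct_mulVec {N K : Type*} [Fintype N]
    [DecidableEq N] [Field K] (A : Matrix N N K) {φ : N → K} {μ : K} (hφ : φ ≠ 0)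
    (h : ∀ z, φ ⬝ᵥ (A *ᵥ z) = μ * (φ ⬝ᵥ z)) : ∃ v ≠ 0, A *ᵥ v = μ • v := by
  have hdet : (A - μ • 1).det = 0 := by
    refine exists_vecMul_eq_zero_iff.mp ⟨φ, hφ, dotProduct_eq _ _ fun z => ?_⟩
    rw [← dotProduct_mulVec, sub_mulVec, dotProduct_sub, h, smul_mulVec, one_mulVec,
      dotProduct_smul, smul_eq_mul, sub_self, zero_dotProduct]
  obtain ⟨v, hv, hAv⟩ := exists_mulVec_eq_zero_iff.mpr hdet
  exact ⟨v, hv, by rwa [sub_mulVec, smul_mulVec, one_mulVec, sub_eq_zero] at hAv⟩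

open Module in
theorem Module.End.iSup_eigenspace_eq_top_of_ker_sq_le {K V : Type*} [Field K] [IsAlgClosed K]
    [AddCommGroup V] [Module K V] [FiniteDimensional K V] (f : End K V)
    (h : ∀ μ : K, LinearMap.ker ((f - μ • 1) ^ 2) ≤ LinearMap.ker (f - μ • 1)) :
    ⨆ μ, f.eigenspace μ = ⊤ := by
  refine top_unique ((iSup_maxGenEigenspace_eq_top f).ge.trans (iSup_mono fun μ x hx => ?_))
  obtain ⟨k, hk⟩ := (mem_maxGenEigenspace f μ x).mp hx
  rw [mem_eigenspace_iff, ← sub_eq_zero]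
  suffices ∀ k : ℕ, ∀ x, ((f - μ • 1) ^ (k + 1)) x = 0 → (f - μ • 1) x = 0 by
    simpa using this k x (by rw [pow_succ', Module.End.mul_apply, hk, map_zero])
  intro k
  induction k with
  | zero => simp
  | succ k ih =>
    intro x hx
    rw [pow_succ, Module.End.mul_apply] at hx
    exact h μ (by rw [LinearMap.mem_ker, sq, Module.End.mul_apply]; exact ih _ hx)

theorem isDiagonalizable_of_basis_eigenvectors {N : Type*} [Fintype N] [DecidableEq N]
    (A : Matrix N N ℂ) (b : Module.Basis N ℂ (N → ℂ)) (hb : ∀ j, ∃ μ : ℂ, A *ᵥ b j = μ • b j) :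
    IsDiagonalizable A := by
  have hinv : b.toMatrix (Pi.basisFun ℂ N) * (Pi.basisFun ℂ N).toMatrix b = 1 :=
    b.toMatrix_mul_toMatrix_flip _
  refine ⟨(Pi.basisFun ℂ N).toMatrix b, isUnit_det_of_left_inverse hinv, ?_⟩
  rw [inv_eq_left_inv hinv, ← LinearMap.toMatrix'_toLin' A, ← LinearMap.toMatrix_eq_toMatrix',
    basis_toMatrix_mul_linearMap_toMatrix_mul_basis_toMatrix]
  intro i j hij
  obtain ⟨μ, hμ⟩ := hb j
  rw [LinearMap.toMatrix_apply, toLin'_apply, hμ, map_smul, b.repr_self, Finsupp.smul_apply,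
    Finsupp.single_eq_of_ne hij, smul_zero]

theorem isDiagonalizable_of_iSup_eigenspace_eq_top {N : Type*} [Fintype N] [DecidableEq N]
    (A : Matrix N N ℂ) (h : ⨆ μ, Module.End.eigenspace (toLin' A) μ = ⊤) : IsDiagonalizable A := by
  have hInt := DirectSum.isInternal_submodule_of_iSupIndep_of_iSup_eq_top
    (Module.End.eigenspaces_iSupIndep _) h
  let b := hInt.collectedBasis fun μ => Module.finBasis ℂ (Module.End.eigenspace (toLin' A) μ)
  have hb : ∀ i, ∃ μ : ℂ, A *ᵥ b i = μ • b i := fun i =>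
    ⟨i.1, Module.End.mem_eigenspace_iff.mp (hInt.collectedBasis_mem _ i)⟩
  refine isDiagonalizable_of_basis_eigenvectors A (b.reindex (b.indexEquiv (Pi.basisFun ℂ N)))
    fun j => ?_
  rw [Module.Basis.reindex_apply]
  exact hb _

theorem exists_jordanChain_of_not_isDiagonalizable {N : Type*} [Fintype N] [DecidableEq N]
    {A : Matrix N N ℂ} (hA : ¬ IsDiagonalizable A) :
    ∃ (μ : ℂ) (x y : N → ℂ), y ≠ 0 ∧ A *ᵥ x = μ • x + y ∧ A *ᵥ y = μ • y := by
  by_contra! h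
  refine hA (isDiagonalizable_of_iSup_eigenspace_eq_top A
    (Module.End.iSup_eigenspace_eq_top_of_ker_sq_le (toLin' A) fun μ x hx => ?_))
  rw [LinearMap.mem_ker, sq, Module.End.mul_apply] at hx
  by_contra hy
  refine h μ x _ hy (by simp) ?_
  simpa [sub_eq_zero] using hx

section Signature

variable {n : ℕ}

noncomputable def hermForm (n : ℕ) :
    (Fin (n + 1) → ℂ) →ₗ[ℂ] (Fin (n + 1) → ℂ) →ₗ⋆[ℂ] ℂ :=
  LinearMap.mk₂'ₛₗ (RingHom.id ℂ) (starRingEnd ℂ) (herm n)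
    (fun _ _ _ => by simp only [herm, Pi.add_apply, mul_add, Finset.sum_add_distrib]; ring)
    (fun _ _ _ => by
      simp only [herm, Pi.smul_apply, smul_eq_mul, mul_add, Finset.mul_sum, RingHom.id_apply]
      ring_nf)
    (fun _ _ _ => by
      simp only [herm, Pi.add_apply, map_add, add_mul, Finset.sum_add_distrib]; ring)
    (fun _ _ _ => by
      simp only [herm, Pi.smul_apply, smul_eq_mul, map_mul, mul_add, Finset.mul_sum]
      ring_nf)

@[simp]
theorem hermForm_apply (z w : Fin (n + 1) → ℂ) : hermForm n z w = herm n z w := rfl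

theorem conj_herm (z w : Fin (n + 1) → ℂ) : conj (herm n w z) = herm n z w := by
  simp only [herm, map_add, map_neg, map_mul, map_sum, conj_conj, mul_comm]

open scoped ComplexOrder in
theorem eq_zero_of_herm_self_eq_zero {z : Fin (n + 1) → ℂ} (h0 : z 0 = 0)
    (h : herm n z z = 0) : z = 0 := by
  have htail : star (Fin.tail z) ⬝ᵥ Fin.tail z = 0 := by
    simpa [herm, h0, dotProduct, Fin.tail] using h
  rw [← Fin.cons_self_tail z, h0, dotProduct_star_self_eq_zero.mp htail]
  exact Matrix.cons_zero_zero

theorem exists_eq_smul_of_herm_eq_zero {u w : Fin (n + 1) → ℂ} (hu : u ≠ 0)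
    (huu : herm n u u = 0) (hww : herm n w w = 0) (hwu : herm n w u = 0) :
    ∃ k : ℂ, w = k • u := by
  have hu0 : u 0 ≠ 0 := fun h => hu (eq_zero_of_herm_self_eq_zero h huu)
  have huw : herm n u w = 0 := by rw [← conj_herm, hwu, map_zero]
  -- a null vector with vanishing `0`-th coordinate, where `herm` is positive definite
  have hz : u 0 • w - w 0 • u = 0 := by
    refine eq_zero_of_herm_self_eq_zero (by simp [mul_comm]) ?_
    simp only [← hermForm_apply, map_sub, map_smulₛₗ, LinearMap.sub_apply, LinearMap.smul_apply]
    simp [huu, hww, huw, hwu]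
  refine ⟨w 0 / u 0, ?_⟩
  rw [sub_eq_zero] at hz
  rw [div_eq_inv_mul, mul_smul, ← hz, smul_smul, inv_mul_cancel₀ hu0, one_smul]

theorem eq_zero_of_herm_eq_zero_of_herm_ne_zero {u w y : Fin (n + 1) → ℂ}
    (huu : herm n u u = 0) (huw : herm n u w ≠ 0)
    (hyy : herm n y y = 0) (hyu : herm n y u = 0) (hyw : herm n y w = 0) : y = 0 := by
  have hu : u ≠ 0 := by
    rintro rfl
    simp [herm] at huw
  obtain ⟨k, rfl⟩ := exists_eq_smul_of_herm_eq_zero hu huu hyy hyu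
  rw [← hermForm_apply, map_smul, LinearMap.smul_apply, hermForm_apply, smul_eq_mul] at hyw
  rw [(mul_eq_zero.mp hyw).resolve_right huw, zero_smul]

def hermDual (v : Fin (n + 1) → ℂ) : Fin (n + 1) → ℂ :=
  Fin.cons (-conj (v 0)) fun i => conj (v i.succ)

theorem hermDual_dotProduct (v z : Fin (n + 1) → ℂ) : hermDual v ⬝ᵥ z = herm n z v := by
  simp [hermDual, herm, dotProduct, Fin.sum_univ_succ]

theorem hermDual_ne_zero {v : Fin (n + 1) → ℂ} (hv : v ≠ 0) : hermDual v ≠ 0 := by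
  refine fun h => hv (funext fun i => ?_)
  have hi := congrFun h i
  cases i using Fin.cases <;> simpa [hermDual] using hi

end Signature

namespace InU1

variable {n : ℕ} {S : Matrix (Fin (n + 1)) (Fin (n + 1)) ℂ}

theorem hermForm_mulVec (hS : InU1 n S) (z w : Fin (n + 1) → ℂ) :
    hermForm n (S *ᵥ z) (S *ᵥ w) = hermForm n z w :=
  hS.2 z w

theorem herm_self_eq_zero_of_mulVec_eq_smul (hS : InU1 n S) {v : Fin (n + 1) → ℂ} {ρ : ℂ}
    (hρ : ρ * conj ρ ≠ 1) (hSv : S *ᵥ v = ρ • v) : herm n v v = 0 :=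
  isometry_apply_eigenvectors_eq_zero _ hS.hermForm_mulVec hSv hSv hρ

theorem exists_mulVec_eq_smul_of_commute (hS : InU1 n S)
    {T : Matrix (Fin (n + 1)) (Fin (n + 1)) ℂ} (hcomm : S * T = T * S)
    {u : Fin (n + 1) → ℂ} {ρ : ℂ} (hu : u ≠ 0) (hSu : S *ᵥ u = ρ • u) (hρ : ρ * conj ρ ≠ 1) :
    ∃ k : ℂ, T *ᵥ u = k • u := by
  have hSTu : S *ᵥ (T *ᵥ u) = ρ • T *ᵥ u := by
    rw [mulVec_mulVec, hcomm, ← mulVec_mulVec, hSu, mulVec_smul]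
  exact exists_eq_smul_of_herm_eq_zero hu (hS.herm_self_eq_zero_of_mulVec_eq_smul hρ hSu)
    (hS.herm_self_eq_zero_of_mulVec_eq_smul hρ hSTu)
    (isometry_apply_eigenvectors_eq_zero _ hS.hermForm_mulVec hSTu hSu hρ)

theorem exists_mulVec_eq_inv_conj_smul (hS : InU1 n S) {v : Fin (n + 1) → ℂ} {lam : ℂ}
    (hv : v ≠ 0) (hSv : S *ᵥ v = lam • v) (hlam : lam ≠ 0) :
    ∃ v₂ ≠ 0, S *ᵥ v₂ = (conj lam)⁻¹ • v₂ := by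
  refine S.exists_mulVec_eq_smul_of_dotProduct_mulVec (hermDual_ne_zero hv) fun z => ?_
  have h := hS.hermForm_mulVec z v
  rw [hSv, map_smulₛₗ, smul_eq_mul, hermForm_apply, hermForm_apply] at h
  rw [hermDual_dotProduct, hermDual_dotProduct, ← h, inv_mul_cancel_left₀ (by simpa)]

theorem exists_eigenvector_herm_ne_zero (hS : InU1 n S) {v : Fin (n + 1) → ℂ} {lam : ℂ}
    (hv : v ≠ 0) (hSv : S *ᵥ v = lam • v) (hlam : lam * conj lam ≠ 1) :
    ∃ (ρ : ℂ) (v₂ : Fin (n + 1) → ℂ), v₂ ≠ 0 ∧ S *ᵥ v₂ = ρ • v₂ ∧ ρ * conj ρ ≠ 1 ∧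
      herm n v₂ v ≠ 0 := by
  have hlam0 : lam ≠ 0 := by
    rintro rfl
    exact hv (mulVec_injective_iff_isUnit.mpr hS.1 (by rw [hSv, zero_smul, mulVec_zero]))
  obtain ⟨v₂, hv₂, hSv₂⟩ := hS.exists_mulVec_eq_inv_conj_smul hv hSv hlam0
  have hρ : (conj lam)⁻¹ * conj (conj lam)⁻¹ ≠ 1 := by
    rwa [map_inv₀, conj_conj, ← mul_inv, mul_comm, Ne, inv_eq_one]
  refine ⟨_, v₂, hv₂, hSv₂, hρ, fun h => hlam ?_⟩
  obtain ⟨k, rfl⟩ := exists_eq_smul_of_herm_eq_zero hv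
    (hS.herm_self_eq_zero_of_mulVec_eq_smul hlam hSv)
    (hS.herm_self_eq_zero_of_mulVec_eq_smul hρ hSv₂) h
  have hk : k ≠ 0 := by
    rintro rfl
    exact hv₂ (zero_smul ℂ v)
  rw [mulVec_smul, hSv, smul_smul, smul_smul] at hSv₂
  have hlam_eq : lam = (conj lam)⁻¹ :=
    mul_left_cancel₀ hk ((smul_left_injective ℂ hv hSv₂).trans (mul_comm _ _))
  exact (mul_eq_one_iff_eq_inv₀ (by simpa using hlam0)).mpr hlam_eq

end InU1

theorem commutes_with_parabolic_eigenvalues_unimodular_general {n : ℕ}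
    (T S : Matrix (Fin (n + 1)) (Fin (n + 1)) ℂ) (hT : InU1 n T) (hS : InU1 n S)
    (hpar : ¬ IsDiagonalizable T) (hcomm : S * T = T * S) :
    ∀ (lam : ℂ) (v : Fin (n + 1) → ℂ), v ≠ 0 → S.mulVec v = lam • v →
      ‖lam‖ = 1 := by
  intro lam v hv hSv
  by_contra hlam
  have hlam' : lam * conj lam ≠ 1 := fun h => hlam <|
    (pow_eq_one_iff_of_nonneg (norm_nonneg lam) two_ne_zero).mp
      (by exact_mod_cast (mul_conj' lam).symm.trans h)
  obtain ⟨ρ, v₂, hv₂, hSv₂, hρ, hpair⟩ := hS.exists_eigenvector_herm_ne_zero hv hSv hlam'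
  obtain ⟨μ₁, hTv⟩ := hS.exists_mulVec_eq_smul_of_commute hcomm hv hSv hlam'
  obtain ⟨μ₂, hTv₂⟩ := hS.exists_mulVec_eq_smul_of_commute hcomm hv₂ hSv₂ hρ
  obtain ⟨μ, x, y, hy, hTx, hTy⟩ := exists_jordanChain_of_not_isDiagonalizable hpar
  have hchain {w : Fin (n + 1) → ℂ} {σ : ℂ} (hw : T *ᵥ w = σ • w) : herm n y w = 0 :=
    isometry_apply_jordanChain_eq_zero _ hT.hermForm_mulVec hTx hTy hw
  exact hy (eq_zero_of_herm_eq_zero_of_herm_ne_zero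
    (hS.herm_self_eq_zero_of_mulVec_eq_smul hρ hSv₂) hpair (hchain hTy) (hchain hTv₂) (hchain hTv))

theorem commutes_with_parabolic_eigenvalues_unimodular {n : ℕ} (hn : 1 ≤ n)
    (T S : Matrix (Fin (n + 1)) (Fin (n + 1)) ℂ) (hT : InU1 n T) (hS : InU1 n S)
    (hpar : ¬ IsDiagonalizable T) (hcomm : S * T = T * S) :
    ∀ (lam : ℂ) (v : Fin (n + 1) → ℂ), v ≠ 0 → S.mulVec v = lam • v →
      ‖lam‖ = 1 :=
  commutes_with_parabolic_eigenvalues_unimodular_general T S hT hS hpar hcomm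
end

section
/- Let g ∈ U(n,1) (with respect to the second Hermitian form) fix the point ∞, i.e. g·e₁ ∈ ℂ·e₁ where e₁ = (1,0,…,0)ᵗ. Then there exist unique μ ∈ ℂ with |μ| = 1, r > 0, U ∈ U(n−1), τ ∈ ℂ^{n−1} and t ∈ ℝ such that g = μ · D_r · R_U · T_{(τ,t)}. (Thus the stabilizer of ∞ in U(n,1) is [S¹ × ℝ⁺ × U(n−1)] ⋉ 𝔑_n.) -/
open Matrix Complex

/-!
Since `g` fixes `e₁`, its first column is `(a, 0, 0)`. Reading `gᴴ J g = J` entry by entry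
then forces `g` to be block upper triangular, `[[a, b, d], [0, A, w], [0, 0, 1/ā]]`, with `A`
unitary, `Aᴴ w = -b̄/ā` and `2 Re (d/a) = -|w|²`. Multiplied out, `μ • D_r R_U T_(τ,t)` has
exactly this shape, so `r = |a|`, `μ = a/r`, `U = μ̄ A`, `τ = Aᴴ w`, `t = 2 Im (d/a)` is a
decomposition; conversely the entries `μ r`, `μ U`, `-μ r τ̄` and `μ r (-|τ|² + i t)/2` of the
product determine the parameters, since `|μ| = 1` and `r > 0` make `μ r` a polar decomposition.
-/

open ComplexConjugate

lemma sum_normSq_mulVec_of_conjTranspose_mul_self {n : Type*} [Fintype n] [DecidableEq n]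
    {A : Matrix n n ℂ} (hA : Aᴴ * A = 1) (v : n → ℂ) :
    ∑ k, normSq ((A *ᵥ v) k) = ∑ k, normSq (v k) := by
  have h : star (A *ᵥ v) ⬝ᵥ (A *ᵥ v) = star v ⬝ᵥ v := by
    rw [star_mulVec, ← dotProduct_mulVec, mulVec_mulVec, hA, one_mulVec]
  apply ofReal_injective
  push_cast
  simpa [dotProduct, ← normSq_eq_conj_mul_self] using h

namespace Idx

variable {m : ℕ}

abbrev top : Idx m := Sum.inl ()

abbrev mid (k : Fin m) : Idx m := Sum.inr (Sum.inl k)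

abbrev bot : Idx m := Sum.inr (Sum.inr ())

end Idx

open Idx

section StabMatrix

variable {m : ℕ}

noncomputable def stabMatrix (μ : ℂ) (r : ℝ) (U : Matrix (Fin m) (Fin m) ℂ) (τ : Fin m → ℂ)
    (t : ℝ) : Matrix (Idx m) (Idx m) ℂ :=
  Matrix.of fun i j =>
    match i, j with
    | Sum.inl _, Sum.inl _ => μ * r
    | Sum.inl _, Sum.inr (Sum.inl l) => -(μ * r * conj (τ l))
    | Sum.inl _, Sum.inr (Sum.inr _) =>
        μ * r * ((-((∑ k, normSq (τ k) : ℝ) : ℂ) + t * I) / 2)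
    | Sum.inr (Sum.inl k), Sum.inr (Sum.inl l) => μ * U k l
    | Sum.inr (Sum.inl k), Sum.inr (Sum.inr _) => μ * (U *ᵥ τ) k
    | Sum.inr (Sum.inr _), Sum.inr (Sum.inr _) => μ * (r : ℂ)⁻¹
    | _, _ => 0

lemma smul_Dil_mul_RU_mul_Htr (μ : ℂ) (r : ℝ) (U : Matrix (Fin m) (Fin m) ℂ)
    (τ : Fin m → ℂ) (t : ℝ) :
    μ • (Dil r * RU U * Htr τ t) = stabMatrix μ r U τ t := by
  ext i j
  rcases i with _ | k | _ <;> rcases j with _ | l | _ <;>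
    simp [mul_apply, Fintype.sum_sum_type, Dil, RU, Htr, stabMatrix, mulVec, dotProduct,
      Finset.mul_sum] <;> ring

lemma stabMatrix_injective {μ μ' : ℂ} {r r' : ℝ} {U U' : Matrix (Fin m) (Fin m) ℂ}
    {τ τ' : Fin m → ℂ} {t t' : ℝ} (hμ : ‖μ‖ = 1) (hμ' : ‖μ'‖ = 1) (hr : 0 < r) (hr' : 0 < r')
    (h : stabMatrix μ r U τ t = stabMatrix μ' r' U' τ' t') :
    (μ, r, U, τ, t) = (μ', r', U', τ', t') := by
  have entry (i j : Idx m) := congrFun (congrFun h i) j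
  have hμr : μ * r = μ' * r' := by simpa [stabMatrix] using entry top top
  obtain rfl : r = r' := by
    simpa [hμ, hμ', abs_of_pos hr, abs_of_pos hr'] using congrArg norm hμr
  obtain rfl : μ = μ' := mul_right_cancel₀ (ofReal_ne_zero.2 hr.ne') hμr
  have hμ0 : μ ≠ 0 := norm_ne_zero_iff.1 (by simp [hμ])
  obtain rfl : U = U' := by
    ext k l
    exact mul_left_cancel₀ hμ0 (by simpa [stabMatrix] using entry (mid k) (mid l))
  obtain rfl : τ = τ' := by
    funext l
    exact (starRingEnd ℂ).injective
      (by simpa [stabMatrix, hμ0, hr.ne'] using entry top (mid l))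
  obtain rfl : t = t' := by simpa [stabMatrix, hμ0, hr.ne'] using entry top bot
  rfl

end StabMatrix

lemma conjTranspose_mul_Jm_mul_apply {m : ℕ} (g : Matrix (Idx m) (Idx m) ℂ) (i j : Idx m) :
    (gᴴ * Jm m * g) i j = conj (g top i) * g bot j + conj (g bot i) * g top j +
      ∑ k, conj (g (mid k) i) * g (mid k) j := by
  simp only [Jm, mul_apply, conjTranspose_apply, RCLike.star_def, of_apply, Fintype.sum_sum_type,
    Finset.univ_unique, PUnit.default_eq_unit, Finset.sum_singleton, mul_zero,
    Finset.sum_const_zero, mul_one, zero_add, add_zero, mul_ite, Finset.sum_ite_eq',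
    Finset.mem_univ, ↓reduceIte]
  ring

section Stabilizer

variable {m : ℕ} {g : Matrix (Idx m) (Idx m) ℂ}

lemma apply_top_eq_zero_of_mulVec_e1 {c : ℂ} (hc : g *ᵥ e1 m = c • e1 m) :
    ∀ i, i ≠ top → g i top = 0 := by
  intro i hi
  have h := congrFun hc i
  rcases i with _ | _ | _
  · exact absurd rfl hi
  all_goals simpa [mulVec, dotProduct, e1, Fintype.sum_sum_type] using h

lemma conj_top_top_mul_bot_bot (hJ : gᴴ * Jm m * g = Jm m)
    (hcol : ∀ i, i ≠ top → g i top = 0) : conj (g top top) * g bot bot = 1 := by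
  have h := conjTranspose_mul_Jm_mul_apply g top bot
  rw [hJ] at h
  simpa [hcol, Jm] using h.symm

lemma bot_mid_eq_zero (hJ : gᴴ * Jm m * g = Jm m) (hcol : ∀ i, i ≠ top → g i top = 0)
    (l : Fin m) : g bot (mid l) = 0 := by
  have ha : conj (g top top) ≠ 0 :=
    left_ne_zero_of_mul_eq_one (conj_top_top_mul_bot_bot hJ hcol)
  have h := conjTranspose_mul_Jm_mul_apply g top (mid l)
  rw [hJ] at h
  simpa [hcol, Jm, ha] using h.symm

lemma submatrix_mid_mem_unitaryGroup (hJ : gᴴ * Jm m * g = Jm m)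
    (hbot : ∀ l, g bot (mid l) = 0) : g.submatrix mid mid ∈ unitaryGroup (Fin m) ℂ := by
  rw [mem_unitaryGroup_iff']
  ext k l
  have h := conjTranspose_mul_Jm_mul_apply g (mid k) (mid l)
  rw [hJ] at h
  simpa [hbot, Jm, mul_apply, one_apply, eq_comm] using h

lemma conjTranspose_submatrix_mid_mulVec (hJ : gᴴ * Jm m * g = Jm m)
    (hbot : ∀ l, g bot (mid l) = 0) :
    (g.submatrix mid mid)ᴴ *ᵥ (fun k => g (mid k) bot) =
      fun l => -(conj (g top (mid l)) * g bot bot) := by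
  funext l
  have h := conjTranspose_mul_Jm_mul_apply g (mid l) bot
  rw [hJ] at h
  simp only [Jm, of_apply, hbot, map_zero, zero_mul, add_zero] at h
  simp only [mulVec, dotProduct, conjTranspose_apply, submatrix_apply, RCLike.star_def]
  linear_combination -h

lemma re_top_bot_div_top_top (hJ : gᴴ * Jm m * g = Jm m)
    (hcol : ∀ i, i ≠ top → g i top = 0) :
    (g top bot / g top top).re = -(∑ k, normSq (g (mid k) bot)) / 2 := by
  have h := conjTranspose_mul_Jm_mul_apply g bot bot
  rw [hJ, eq_inv_of_mul_eq_one_right (conj_top_top_mul_bot_bot hJ hcol), map_inv₀,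
    conj_conj] at h
  have hz : g top bot / g top top + conj (g top bot / g top top) =
      -∑ k, (normSq (g (mid k) bot) : ℂ) := by
    rw [map_div₀]
    simp only [normSq_eq_conj_mul_self, div_eq_mul_inv]
    simp only [Jm, of_apply] at h
    linear_combination -h
  rw [add_conj] at hz
  apply ofReal_injective
  push_cast at hz ⊢
  linear_combination hz / 2

lemma exists_eq_stabMatrix (hJ : gᴴ * Jm m * g = Jm m) (hcol : ∀ i, i ≠ top → g i top = 0) :
    ∃ p : ℂ × ℝ × Matrix (Fin m) (Fin m) ℂ × (Fin m → ℂ) × ℝ,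
      ‖p.1‖ = 1 ∧ 0 < p.2.1 ∧ p.2.2.1 ∈ unitaryGroup (Fin m) ℂ ∧
        g = stabMatrix p.1 p.2.1 p.2.2.1 p.2.2.2.1 p.2.2.2.2 := by
  have hah := conj_top_top_mul_bot_bot hJ hcol
  have hbot := bot_mid_eq_zero hJ hcol
  have hA := submatrix_mid_mem_unitaryGroup hJ hbot
  have hτ := conjTranspose_submatrix_mid_mulVec hJ hbot
  have hre := re_top_bot_div_top_top hJ hcol
  set a := g top top
  set A := g.submatrix mid mid
  set w : Fin m → ℂ := fun k => g (mid k) bot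
  have ha : a ≠ 0 := by rintro h0; simp [h0] at hah
  have hr : 0 < ‖a‖ := norm_pos_iff.2 ha
  set μ := a / ‖a‖
  have hμ : ‖μ‖ = 1 := by simp [μ, ha]
  have hμμ : conj μ * μ = 1 := by simp [conj_mul', hμ]
  have haμ : a = μ * ‖a‖ := by simp [μ, hr.ne']
  refine ⟨(μ, ‖a‖, conj μ • A, Aᴴ *ᵥ w, 2 * (g top bot / a).im), hμ, hr, ?_, ?_⟩
  · exact Unitary.smul_mem_of_mem
      (Unitary.mem_iff_star_mul_self.2 (by simpa [mul_comm] using hμμ)) hA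
  have hah' : a * conj (g bot bot) = 1 := by simpa using congrArg conj hah
  have hAA : A * Aᴴ = 1 := mul_eq_one_comm.1 ((mem_unitaryGroup_iff').1 hA)
  ext i j
  rcases i with ⟨⟩ | k | ⟨⟩ <;> rcases j with ⟨⟩ | l | ⟨⟩ <;> simp only [stabMatrix, of_apply]
  · exact haμ
  · rw [hτ, ← haμ]
    simp only [map_neg, map_mul, conj_conj, mul_neg, neg_neg]
    linear_combination (-g top (mid l)) * hah'
  · rw [← haμ, sum_normSq_mulVec_of_conjTranspose_mul_self
      (by rwa [conjTranspose_conjTranspose]), mul_comm, ← div_eq_iff ha]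
    apply Complex.ext <;> simp [hre, w]
  · exact hcol _ (by simp)
  · rw [Matrix.smul_apply, smul_eq_mul, ← mul_assoc, mul_comm μ, hμμ, one_mul]
    rfl
  · rw [smul_mulVec, mulVec_mulVec, hAA, one_mulVec, Pi.smul_apply, smul_eq_mul, ← mul_assoc,
      mul_comm μ, hμμ, one_mul]
  · exact hcol _ (by simp)
  · exact hbot l
  · have hconj : conj a = conj μ * ‖a‖ := by rw [← conj_ofReal, ← map_mul, ← haμ]
    apply mul_left_cancel₀ ((map_ne_zero (starRingEnd ℂ)).2 ha)
    rw [hah, hconj, mul_mul_mul_comm, hμμ, mul_inv_cancel₀ (ofReal_ne_zero.2 hr.ne'), one_mul]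

end Stabilizer

theorem stabilizer_of_infinity_decomposition_general {m : ℕ}
    (g : Matrix (Idx m) (Idx m) ℂ) (hg : InU2 g)
    (hfix : ∃ c : ℂ, g.mulVec (e1 m) = c • e1 m) :
    ∃! p : ℂ × ℝ × Matrix (Fin m) (Fin m) ℂ × (Fin m → ℂ) × ℝ,
      ‖p.1‖ = 1 ∧ 0 < p.2.1 ∧ p.2.2.1 ∈ Matrix.unitaryGroup (Fin m) ℂ ∧
        g = p.1 • (Dil p.2.1 * RU p.2.2.1 * Htr p.2.2.2.1 p.2.2.2.2) := by
  obtain ⟨-, hJ⟩ := hg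
  obtain ⟨c, hc⟩ := hfix
  simp only [smul_Dil_mul_RU_mul_Htr]
  obtain ⟨p, hp, hpr, hpU, hpg⟩ := exists_eq_stabMatrix hJ (apply_top_eq_zero_of_mulVec_e1 hc)
  exact ⟨p, ⟨hp, hpr, hpU, hpg⟩, fun q ⟨hq, hqr, _, hqg⟩ =>
    stabMatrix_injective hq hp hqr hpr (hqg.symm.trans hpg)⟩

theorem stabilizer_of_infinity_decomposition {m : ℕ} (hm : 1 ≤ m)
    (g : Matrix (Idx m) (Idx m) ℂ) (hg : InU2 g)
    (hfix : ∃ c : ℂ, g.mulVec (e1 m) = c • e1 m) :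
    ∃! p : ℂ × ℝ × Matrix (Fin m) (Fin m) ℂ × (Fin m → ℂ) × ℝ,
      ‖p.1‖ = 1 ∧ 0 < p.2.1 ∧ p.2.2.1 ∈ Matrix.unitaryGroup (Fin m) ℂ ∧
        g = p.1 • (Dil p.2.1 * RU p.2.2.1 * Htr p.2.2.2.1 p.2.2.2.2) :=
  stabilizer_of_infinity_decomposition_general g hg hfix
end

section
/- Centralizer of a vertical translation: let t ∈ ℝ, t ≠ 0. An element S ∈ U(n,1) commutes with the vertical Heisenberg translation T_{(0,t)} if and only if there exist μ ∈ ℂ with |μ| = 1, a unitary V ∈ U(n−1), σ ∈ ℂ^{n−1} and s ∈ ℝ such that S = μ · R_V · T_{(σ,s)}. -/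
open Matrix Complex

/-!
Since `T_{(0,t)} = 1 + (it/2) E`, where `E` is the matrix unit in the corner `(1, n+1)`, commuting
with `T_{(0,t)}` means commuting with `E`: the first column and the last row of `S` vanish off the
diagonal and the two diagonal corners agree. Row by row, `S J Sᴴ = J` then shows that this common
corner entry `μ` has modulus one. Once `S` is divided by `μ`, writing its top row as
`(1, -σᴴ, c)`, the same relations say that the middle block `V` is unitary, that the last column
below the corner is `V σ`, and that `Re c = -|σ|²/2`: this is exactly the shape of
`R_V T_{(σ, 2 Im c)}`.
-/

open ComplexConjugate

section HeisenbergBlocks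

variable {m : ℕ}

local notation "ι₀" => Sum.inl ()
local notation "ιₙ" => Sum.inr (Sum.inr ())
local notation "ι" k => Sum.inr (Sum.inl k)

theorem Htr_zero_eq_one_add_smul_single (t : ℝ) :
    Htr (0 : Fin m → ℂ) t = 1 + ((t : ℂ) * I / 2) • single ι₀ ιₙ 1 := by
  ext (_ | k | _) (_ | l | _) <;> simp [Htr, one_apply]

theorem Htr_commute_Htr_zero (σ : Fin m → ℂ) (s t : ℝ) :
    Commute (Htr σ s) (Htr 0 t) := by
  ext (_ | k | _) (_ | l | _) <;>
    simp [Htr, mul_apply, Fintype.sum_sum_type, add_comm]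

theorem RU_commute_Htr_zero (V : Matrix (Fin m) (Fin m) ℂ) (t : ℝ) :
    Commute (RU V) (Htr 0 t) := by
  ext (_ | k | _) (_ | l | _) <;> simp [RU, Htr, mul_apply, Fintype.sum_sum_type]

theorem commute_single_of_commute_Htr_zero {t : ℝ} (ht : t ≠ 0)
    {S : Matrix (Idx m) (Idx m) ℂ} (h : Commute (Htr 0 t) S) :
    Commute (single ι₀ ιₙ 1) S := by
  have hc : (t : ℂ) * I / 2 ≠ 0 := by simp [ht]
  rw [Htr_zero_eq_one_add_smul_single] at h
  simpa only [add_sub_cancel_left, Commute.smul_left_iff₀ hc] using h.sub_left (Commute.one_left S)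

theorem Jm_mul_Jm : Jm m * Jm m = 1 := by
  ext (_ | k | _) (_ | l | _) <;> simp [Jm, mul_apply, Fintype.sum_sum_type, one_apply]

theorem mul_Jm_mul_conjTranspose_eq {g : Matrix (Idx m) (Idx m) ℂ}
    (hg : gᴴ * Jm m * g = Jm m) : g * Jm m * gᴴ = Jm m := by
  have hinv : g * (Jm m * gᴴ * Jm m) = 1 :=
    mul_eq_one_comm.mp <| by simp only [mul_assoc] at hg ⊢; rw [hg, Jm_mul_Jm]
  calc g * Jm m * gᴴ = g * (Jm m * gᴴ * Jm m) * Jm m := by simp only [mul_assoc, Jm_mul_Jm, mul_one]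
    _ = Jm m := by rw [hinv, one_mul]

theorem row_pairing_eq_Jm_apply {S : Matrix (Idx m) (Idx m) ℂ} (hS : Sᴴ * Jm m * S = Jm m)
    (p q : Idx m) :
    S p ι₀ * conj (S q ιₙ) + S p ιₙ * conj (S q ι₀) + ∑ k, S p (ι k) * conj (S q (ι k)) =
      Jm m p q := by
  rw [← mul_Jm_mul_conjTranspose_eq hS]
  simp [Jm, mul_apply, Fintype.sum_sum_type]
  ring

theorem eq_RU_mul_Htr_of_commute_single {S : Matrix (Idx m) (Idx m) ℂ}
    (hS : Sᴴ * Jm m * S = Jm m) (hE : Commute (single ι₀ ιₙ 1) S) (h₀ : S ι₀ ι₀ = 1) :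
    ∃ (V : Matrix (Fin m) (Fin m) ℂ) (σ : Fin m → ℂ) (s : ℝ),
      V ∈ unitaryGroup (Fin m) ℂ ∧ S = RU V * Htr σ s := by
  have hcol : ∀ i, i ≠ ι₀ → S i ι₀ = 0 := fun i hi => col_eq_zero_of_commute_single hE hi
  have hrow : ∀ j, j ≠ ιₙ → S ιₙ j = 0 := fun j hj => row_eq_zero_of_commute_single hE hj
  have hₙ : S ιₙ ιₙ = 1 := (diag_eq_of_commute_single hE).symm.trans h₀
  have hJ := row_pairing_eq_Jm_apply hS
  set A : Matrix (Fin m) (Fin m) ℂ := of fun k l => S (ι k) (ι l)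
  set σ : Fin m → ℂ := fun l => -conj (S ι₀ (ι l))
  have hA : A ∈ unitaryGroup (Fin m) ℂ := by
    rw [mem_unitaryGroup_iff]
    ext k l
    simpa [A, mul_apply, hcol, Jm, one_apply] using hJ (ι k) (ι l)
  have hd (k : Fin m) : S (ι k) ιₙ + ∑ j, A k j * conj (S ι₀ (ι j)) = 0 := by
    simpa [hcol, h₀, Jm, A] using hJ (ι k) ι₀
  have hre : ∑ j, normSq (S ι₀ (ι j)) = -2 * (S ι₀ ιₙ).re := by
    have := congrArg re (hJ ι₀ ι₀)
    simp [Jm, normSq_apply, h₀] at this ⊢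
    linarith
  refine ⟨A, σ, 2 * (S ι₀ ιₙ).im, hA, ?_⟩
  ext i j
  rcases i with ⟨⟨⟩⟩ | k | ⟨⟨⟩⟩ <;> rcases j with ⟨⟨⟩⟩ | l | ⟨⟨⟩⟩
  all_goals simp [RU, Htr, mul_apply, Fintype.sum_sum_type, hcol, hrow]
  · exact h₀
  · simp [σ]
  · have hσ : ∑ i, (normSq (σ i) : ℂ) = -2 * ((S ι₀ ιₙ).re : ℂ) := by
      simp only [σ, normSq_neg, normSq_conj]
      exact_mod_cast hre
    rw [hσ]
    linear_combination -(re_add_im (S ι₀ ιₙ))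
  · rfl
  · simp only [σ, mul_neg, Finset.sum_neg_distrib]
    linear_combination hd k
  · exact hₙ

theorem exists_eq_smul_RU_mul_Htr_of_commute_single {S : Matrix (Idx m) (Idx m) ℂ}
    (hS : Sᴴ * Jm m * S = Jm m) (hE : Commute (single ι₀ ιₙ 1) S) :
    ∃ (μ : ℂ) (V : Matrix (Fin m) (Fin m) ℂ) (σ : Fin m → ℂ) (s : ℝ),
      ‖μ‖ = 1 ∧ V ∈ unitaryGroup (Fin m) ℂ ∧ S = μ • (RU V * Htr σ s) := by
  have ha : S ι₀ ι₀ ∈ unitary ℂ := by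
    have hcol : S ιₙ ι₀ = 0 := col_eq_zero_of_commute_single hE (by simp)
    refine Unitary.mem_iff_self_mul_star.mpr ?_
    simpa [Jm, hcol, ← diag_eq_of_commute_single hE, row_eq_zero_of_commute_single hE]
      using row_pairing_eq_Jm_apply hS ι₀ ιₙ
  set a := S ι₀ ι₀
  have hS' : (star a • S)ᴴ * Jm m * (star a • S) = Jm m := by
    rw [conjTranspose_smul, Matrix.smul_mul, Matrix.smul_mul, Matrix.mul_smul, hS, smul_smul,
      star_star, Unitary.mul_star_self_of_mem ha, one_smul]
  obtain ⟨V, σ, s, hV, h⟩ := eq_RU_mul_Htr_of_commute_single hS' (hE.smul_right _)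
    (Unitary.star_mul_self_of_mem ha)
  refine ⟨a, V, σ, s, CStarRing.norm_of_mem_unitary ha, hV, ?_⟩
  rw [← h, smul_smul, Unitary.mul_star_self_of_mem ha, one_smul]

end HeisenbergBlocks

theorem centralizer_of_vertical_translation_general {m : ℕ} (t : ℝ) (ht : t ≠ 0)
    (S : Matrix (Idx m) (Idx m) ℂ) (hS : InU2 S) :
    S * Htr (0 : Fin m → ℂ) t = Htr (0 : Fin m → ℂ) t * S ↔
      ∃ (μ : ℂ) (V : Matrix (Fin m) (Fin m) ℂ) (σ : Fin m → ℂ) (s : ℝ),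
        ‖μ‖ = 1 ∧ V ∈ Matrix.unitaryGroup (Fin m) ℂ ∧
          S = μ • (RU V * Htr σ s) := by
  constructor
  · intro hcomm
    exact exists_eq_smul_RU_mul_Htr_of_commute_single hS.2
      (commute_single_of_commute_Htr_zero ht (Commute.symm hcomm))
  · rintro ⟨μ, V, σ, s, -, -, rfl⟩
    exact (((RU_commute_Htr_zero V t).mul_left (Htr_commute_Htr_zero σ s t)).smul_left μ).eq

theorem centralizer_of_vertical_translation {m : ℕ} (hm : 1 ≤ m) (t : ℝ) (ht : t ≠ 0)
    (S : Matrix (Idx m) (Idx m) ℂ) (hS : InU2 S) :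
    S * Htr (0 : Fin m → ℂ) t = Htr (0 : Fin m → ℂ) t * S ↔
      ∃ (μ : ℂ) (V : Matrix (Fin m) (Fin m) ℂ) (σ : Fin m → ℂ) (s : ℝ),
        ‖μ‖ = 1 ∧ V ∈ Matrix.unitaryGroup (Fin m) ℂ ∧
          S = μ • (RU V * Htr σ s) :=
  centralizer_of_vertical_translation_general t ht S hS
end

section
/- Centralizer of a non-vertical translation: let τ ∈ ℂ^{n−1}, τ ≠ 0, and t ∈ ℝ. An element S ∈ U(n,1) commutes with the non-vertical Heisenberg translation T_{(τ,t)} if and only if there exist μ ∈ ℂ with |μ| = 1, a unitary V ∈ U(n−1) with Vτ = τ, σ ∈ ℂ^{n−1} with Im(τᴴσ) = 0, and s ∈ ℝ, such that S = μ · R_V · T_{(σ,s)}. -/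
open Matrix Complex

/-!
Write `T = T_{(τ,t)}`. Since `(T - 1)² = -|τ|² E_{1,n+1}`, an `S` commuting with `T` commutes with
`E_{1,n+1}`, so `S e₁ = a e₁` and `e_{n+1}ᵀ S = a e_{n+1}ᵀ`, and `SᴴJS = J` forces `|a| = 1`.
Then `ā S` is a `J`-unitary matrix fixing `e₁` and `e_{n+1}ᵀ`, and these are exactly the
products `R_V T_{(σ,s)}`. Finally, the Heisenberg group law
`T_{(σ,s)} T_{(τ,t)} = T_{(σ+τ, s+t-2 Im σᴴτ)}` and the relation `R_V T_{(τ,t)} = T_{(Vτ,t)} R_V`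
show that `R_V T_{(σ,s)}` commutes with `T_{(τ,t)}` iff `Vτ = τ` and `Im τᴴσ = 0`.
-/

open ComplexConjugate

namespace Heisenberg

section UnitaryGroup

variable {n R : Type*} [Fintype n] [DecidableEq n] [CommRing R] [StarRing R]
  {V : Matrix n n R}

lemma star_mulVec_vecMul (hV : V ∈ unitaryGroup n R) (x : n → R) :
    star (V *ᵥ x) ᵥ* V = star x := by
  rw [star_mulVec, vecMul_vecMul, ← star_eq_conjTranspose, mem_unitaryGroup_iff'.mp hV,
    vecMul_one]

lemma star_mulVec_dotProduct_mulVec (hV : V ∈ unitaryGroup n R) (x : n → R) :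
    star (V *ᵥ x) ⬝ᵥ (V *ᵥ x) = star x ⬝ᵥ x := by
  rw [dotProduct_mulVec, star_mulVec_vecMul hV]

lemma star_mulVec_eq_self_iff (hV : V ∈ unitaryGroup n R) {x : n → R} :
    star V *ᵥ x = x ↔ V *ᵥ x = x := by
  constructor <;> intro h <;> conv_lhs => rw [← h, mulVec_mulVec]
  · rw [mem_unitaryGroup_iff.mp hV, one_mulVec]
  · rw [mem_unitaryGroup_iff'.mp hV, one_mulVec]

end UnitaryGroup

variable {m : ℕ}

lemma mul_apply_idx {α : Type*} [NonUnitalNonAssocSemiring α] (M N : Matrix (Idx m) (Idx m) α)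
    (i j : Idx m) :
    (M * N) i j = M i (Sum.inl ()) * N (Sum.inl ()) j +
      ∑ k : Fin m, M i (Sum.inr (Sum.inl k)) * N (Sum.inr (Sum.inl k)) j +
      M i (Sum.inr (Sum.inr ())) * N (Sum.inr (Sum.inr ())) j := by
  simp only [Matrix.mul_apply, Fintype.sum_sum_type, Fintype.sum_unique, add_assoc]

lemma sum_conj_mul_eq_dotProduct (x y : Fin m → ℂ) : ∑ k, conj (x k) * y k = star x ⬝ᵥ y := rfl

lemma sum_normSq_eq_dotProduct (x : Fin m → ℂ) : ∑ k, (normSq (x k) : ℂ) = star x ⬝ᵥ x := by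
  simp [dotProduct, normSq_eq_conj_mul_self]

lemma dotc_eq_dotProduct (x y : Fin m → ℂ) : dotc x y = star x ⬝ᵥ y := rfl

lemma im_dotc_swap (x y : Fin m → ℂ) : (dotc x y).im = -(dotc y x).im := by
  rw [dotc_eq_dotProduct, star_dotProduct, star_def, conj_im, dotc_eq_dotProduct]

lemma Htr_mul_Htr (σ τ : Fin m → ℂ) (s t : ℝ) :
    Htr σ s * Htr τ t = Htr (σ + τ) (s + t - 2 * (dotc σ τ).im) := by
  ext i j
  rcases i with ⟨⟨⟩⟩ | k | ⟨⟨⟩⟩ <;> rcases j with ⟨⟨⟩⟩ | l | ⟨⟨⟩⟩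
  case inl.inr.inr =>
    simp only [Htr, ofReal_sum, sum_normSq_eq_dotProduct, mul_apply_idx, of_apply, one_mul, neg_mul,
      Finset.sum_neg_distrib, sum_conj_mul_eq_dotProduct, mul_one, Pi.add_apply, map_add, neg_add_rev, ofReal_sub,
      ofReal_add, ofReal_mul, ofReal_ofNat]
    rw [show (fun k => σ k + τ k) = σ + τ from rfl, star_add, add_dotProduct, dotProduct_add,
      dotProduct_add, star_dotProduct τ σ, dotc_eq_dotProduct, star_def]
    have h := sub_conj (star σ ⬝ᵥ τ)
    push_cast at h
    linear_combination -h / 2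
  all_goals simp [mul_apply_idx, Htr, add_comm]

lemma Htr_inj {σ τ : Fin m → ℂ} {s t : ℝ} : Htr σ s = Htr τ t ↔ σ = τ ∧ s = t := by
  refine ⟨fun h => ?_, fun ⟨hσ, hs⟩ => hσ ▸ hs ▸ rfl⟩
  obtain rfl : σ = τ := funext fun k => by
    simpa [Htr] using congrFun (congrFun h (Sum.inr (Sum.inl k))) (Sum.inr (Sum.inr ()))
  simpa [Htr] using congrArg im (congrFun (congrFun h (Sum.inl ())) (Sum.inr (Sum.inr ())))

lemma RU_mul_RU (A B : Matrix (Fin m) (Fin m) ℂ) : RU A * RU B = RU (A * B) := by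
  ext i j
  rcases i with ⟨⟨⟩⟩ | k | ⟨⟨⟩⟩ <;> rcases j with ⟨⟨⟩⟩ | l | ⟨⟨⟩⟩ <;>
    simp [RU, Matrix.mul_apply]

lemma RU_one : RU (1 : Matrix (Fin m) (Fin m) ℂ) = 1 := by
  ext i j
  rcases i with ⟨⟨⟩⟩ | k | ⟨⟨⟩⟩ <;> rcases j with ⟨⟨⟩⟩ | l | ⟨⟨⟩⟩ <;>
    simp [RU, Matrix.one_apply]

variable {V : Matrix (Fin m) (Fin m) ℂ}

lemma isUnit_RU (hV : V ∈ unitaryGroup (Fin m) ℂ) : IsUnit (RU V) :=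
  .of_mul_eq_one (RU (star V)) (by rw [RU_mul_RU, mem_unitaryGroup_iff.mp hV, RU_one])

lemma RU_mul_Htr (hV : V ∈ unitaryGroup (Fin m) ℂ) (τ : Fin m → ℂ) (t : ℝ) :
    RU V * Htr τ t = Htr (V *ᵥ τ) t * RU V := by
  ext i j
  rcases i with ⟨⟨⟩⟩ | k | ⟨⟨⟩⟩ <;> rcases j with ⟨⟨⟩⟩ | l | ⟨⟨⟩⟩
  case inl.inr.inl =>
    simpa [mul_apply_idx, RU, Htr, vecMul, dotProduct] using
      (congrFun (star_mulVec_vecMul hV τ) l).symm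
  case inr.inl.inr.inr => simp [mul_apply_idx, RU, Htr, mulVec, dotProduct]
  all_goals simp [mul_apply_idx, RU, Htr, sum_normSq_eq_dotProduct, star_mulVec_dotProduct_mulVec hV]

theorem commute_RU_mul_Htr_iff (hV : V ∈ unitaryGroup (Fin m) ℂ) (σ τ : Fin m → ℂ) (s t : ℝ) :
    Commute (RU V * Htr σ s) (Htr τ t) ↔ V *ᵥ τ = τ ∧ (dotc τ σ).im = 0 := by
  have hswap : Htr τ t * RU V = RU V * Htr (star V *ᵥ τ) t := by
    rw [RU_mul_Htr hV, mulVec_mulVec, mem_unitaryGroup_iff.mp hV, one_mulVec]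
  rw [Commute, SemiconjBy, Matrix.mul_assoc, Htr_mul_Htr, ← Matrix.mul_assoc, hswap,
    Matrix.mul_assoc, Htr_mul_Htr, (isUnit_RU hV).mul_right_inj, Htr_inj, add_comm σ,
    add_left_inj, eq_comm, star_mulVec_eq_self_iff hV, im_dotc_swap σ]
  constructor
  · rintro ⟨hτ, hst⟩
    rw [(star_mulVec_eq_self_iff hV).2 hτ] at hst
    exact ⟨hτ, by linarith⟩
  · rintro ⟨hτ, hIm⟩
    rw [(star_mulVec_eq_self_iff hV).2 hτ, hIm]
    exact ⟨hτ, by ring⟩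

@[simp] lemma mulVec_e1_apply (g : Matrix (Idx m) (Idx m) ℂ) (i : Idx m) :
    (g *ᵥ e1 m) i = g i (Sum.inl ()) := by
  simp [mulVec, dotProduct, e1]

@[simp] lemma elast_vecMul_apply (g : Matrix (Idx m) (Idx m) ℂ) (j : Idx m) :
    (elast m ᵥ* g) j = g (Sum.inr (Sum.inr ())) j := by
  simp [vecMul, dotProduct, elast]

lemma conjTranspose_mul_Jm_mul_apply (g : Matrix (Idx m) (Idx m) ℂ) (i j : Idx m) :
    (gᴴ * Jm m * g) i j = conj (g (Sum.inl ()) i) * g (Sum.inr (Sum.inr ())) j +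
      ∑ k, conj (g (Sum.inr (Sum.inl k)) i) * g (Sum.inr (Sum.inl k)) j +
      conj (g (Sum.inr (Sum.inr ())) i) * g (Sum.inl ()) j := by
  simp only [Jm, Matrix.mul_apply, conjTranspose_apply, RCLike.star_def, of_apply,
    Fintype.sum_sum_type, Finset.univ_unique, PUnit.default_eq_unit, Finset.sum_singleton, mul_zero,
    Finset.sum_const_zero, mul_one, zero_add, add_zero, mul_ite, Finset.sum_ite_eq',
    Finset.mem_univ, ↓reduceIte]
  ring

lemma eq_RU_mul_Htr_of_blocks {g : Matrix (Idx m) (Idx m) ℂ} {A : Matrix (Fin m) (Fin m) ℂ}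
    {w : Fin m → ℂ} (he1 : g *ᵥ e1 m = e1 m) (helast : elast m ᵥ* g = elast m)
    (hA : ∀ k l, g (Sum.inr (Sum.inl k)) (Sum.inr (Sum.inl l)) = A k l)
    (hw : ∀ k, g (Sum.inr (Sum.inl k)) (Sum.inr (Sum.inr ())) = w k)
    (hAu : A ∈ unitaryGroup (Fin m) ℂ)
    (hρ : ∀ l, g (Sum.inl ()) (Sum.inr (Sum.inl l)) = -(star w ᵥ* A) l)
    (hc : g (Sum.inl ()) (Sum.inr (Sum.inr ())) + conj (g (Sum.inl ()) (Sum.inr (Sum.inr ()))) =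
      -(star w ⬝ᵥ w)) :
    g = RU A * Htr (Aᴴ *ᵥ w) (2 * (g (Sum.inl ()) (Sum.inr (Sum.inr ()))).im) := by
  have hcol (i) : g i (Sum.inl ()) = e1 m i := by simpa using congrFun he1 i
  have hrow (j) : g (Sum.inr (Sum.inr ())) j = elast m j := by simpa using congrFun helast j
  ext i j
  rcases i with ⟨⟨⟩⟩ | k | ⟨⟨⟩⟩ <;> rcases j with ⟨⟨⟩⟩ | l | ⟨⟨⟩⟩
  case inl.inr.inl =>
    simp [mul_apply_idx, RU, Htr, hρ, mulVec_conjTranspose]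
  case inl.inr.inr =>
    have hAu' : Aᴴ ∈ unitaryGroup (Fin m) ℂ := Unitary.star_mem hAu
    simp only [RU, Htr, ofReal_sum, ofReal_mul, ofReal_ofNat, mul_apply_idx, of_apply, one_mul,
      zero_mul, Finset.sum_const_zero, add_zero, mul_one]
    rw [sum_normSq_eq_dotProduct, star_mulVec_dotProduct_mulVec hAu', ← hc, add_conj]
    push_cast
    linear_combination (re_add_im (g (Sum.inl ()) (Sum.inr (Sum.inr ())))).symm
  case inr.inl.inr.inr =>
    simp only [hw, RU, Htr, mul_apply_idx, of_apply, zero_mul, zero_add, mul_one, add_zero]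
    change w k = (A *ᵥ (Aᴴ *ᵥ w)) k
    rw [mulVec_mulVec, ← star_eq_conjTranspose, mem_unitaryGroup_iff.mp hAu, one_mulVec]
  all_goals simp [mul_apply_idx, RU, Htr, hcol, hrow, hA, e1, elast]

theorem exists_eq_RU_mul_Htr {g : Matrix (Idx m) (Idx m) ℂ} (hJ : gᴴ * Jm m * g = Jm m)
    (he1 : g *ᵥ e1 m = e1 m) (helast : elast m ᵥ* g = elast m) :
    ∃ (V : Matrix (Fin m) (Fin m) ℂ) (σ : Fin m → ℂ) (s : ℝ),
      V ∈ unitaryGroup (Fin m) ℂ ∧ g = RU V * Htr σ s := by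
  have hrow (j) : g (Sum.inr (Sum.inr ())) j = elast m j := by simpa using congrFun helast j
  have hJ' (i j) := congrFun (congrFun hJ i) j
  simp only [conjTranspose_mul_Jm_mul_apply, hrow] at hJ'
  obtain ⟨A, hA⟩ : ∃ A : Matrix (Fin m) (Fin m) ℂ,
      ∀ k l, g (Sum.inr (Sum.inl k)) (Sum.inr (Sum.inl l)) = A k l := ⟨of _, fun _ _ => rfl⟩
  obtain ⟨w, hw⟩ : ∃ w : Fin m → ℂ,
      ∀ k, g (Sum.inr (Sum.inl k)) (Sum.inr (Sum.inr ())) = w k := ⟨_, fun _ => rfl⟩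
  have hAu : A ∈ unitaryGroup (Fin m) ℂ := by
    rw [mem_unitaryGroup_iff']
    ext k l
    simpa [elast, Jm, hA, Matrix.mul_apply, Matrix.one_apply] using
      hJ' (Sum.inr (Sum.inl k)) (Sum.inr (Sum.inl l))
  have hρ (l) : g (Sum.inl ()) (Sum.inr (Sum.inl l)) = -(star w ᵥ* A) l := by
    have := hJ' (Sum.inr (Sum.inr ())) (Sum.inr (Sum.inl l))
    simp only [elast, Jm, of_apply, hw, hA, mul_zero, zero_add, map_one, one_mul] at this
    simp only [vecMul, dotProduct, Pi.star_apply, star_def]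
    linear_combination this
  have hc : g (Sum.inl ()) (Sum.inr (Sum.inr ())) + conj (g (Sum.inl ()) (Sum.inr (Sum.inr ()))) =
      -(star w ⬝ᵥ w) := by
    have := hJ' (Sum.inr (Sum.inr ())) (Sum.inr (Sum.inr ()))
    simp only [elast, Jm, of_apply, hw, mul_one, map_one, one_mul] at this
    rw [← sum_conj_mul_eq_dotProduct]
    linear_combination this
  exact ⟨A, _, _, hAu, eq_RU_mul_Htr_of_blocks he1 helast hA hw hAu hρ hc⟩

lemma sq_Htr_sub_one (τ : Fin m → ℂ) (t : ℝ) :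
    (Htr τ t - 1) ^ 2 = (-(star τ ⬝ᵥ τ)) • single (Sum.inl ()) (Sum.inr (Sum.inr ())) 1 := by
  ext i j
  rcases i with ⟨⟨⟩⟩ | k | ⟨⟨⟩⟩ <;> rcases j with ⟨⟨⟩⟩ | l | ⟨⟨⟩⟩ <;>
    simp [sq, mul_apply_idx, Htr, Matrix.one_apply, sum_conj_mul_eq_dotProduct]

open scoped ComplexOrder in
lemma commute_single_of_commute_Htr {S : Matrix (Idx m) (Idx m) ℂ} {τ : Fin m → ℂ} {t : ℝ}
    (hτ : τ ≠ 0) (h : Commute S (Htr τ t)) :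
    Commute (single (Sum.inl ()) (Sum.inr (Sum.inr ())) 1) S := by
  have h2 := (h.sub_right (Commute.one_right _)).pow_right 2
  have hne : star τ ⬝ᵥ τ ≠ 0 := dotProduct_star_self_eq_zero.not.2 hτ
  rw [sq_Htr_sub_one] at h2
  simpa [smul_smul, hne] using (h2.smul_right (-(star τ ⬝ᵥ τ))⁻¹).symm

lemma mulVec_e1_and_elast_vecMul_of_commute_single {S : Matrix (Idx m) (Idx m) ℂ}
    (h : Commute (single (Sum.inl ()) (Sum.inr (Sum.inr ())) 1) S) :
    S *ᵥ e1 m = S (Sum.inl ()) (Sum.inl ()) • e1 m ∧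
      elast m ᵥ* S = S (Sum.inl ()) (Sum.inl ()) • elast m := by
  constructor <;> ext i <;> rcases i with ⟨⟨⟩⟩ | k | ⟨⟨⟩⟩ <;>
    simp [e1, elast, col_eq_zero_of_commute_single h, row_eq_zero_of_commute_single h,
      diag_eq_of_commute_single h]

lemma conj_mul_self_eq_one_of_mulVec_e1 {S : Matrix (Idx m) (Idx m) ℂ} {a : ℂ}
    (hJ : Sᴴ * Jm m * S = Jm m) (he1 : S *ᵥ e1 m = a • e1 m)
    (helast : elast m ᵥ* S = a • elast m) : conj a * a = 1 := by
  have hcol (i) : S i (Sum.inl ()) = a * e1 m i := by simpa using congrFun he1 i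
  have hrow (j) : S (Sum.inr (Sum.inr ())) j = a * elast m j := by simpa using congrFun helast j
  have h := congrFun (congrFun hJ (Sum.inl ())) (Sum.inr (Sum.inr ()))
  rw [conjTranspose_mul_Jm_mul_apply] at h
  simpa [hcol, hrow, e1, elast, Jm] using h

end Heisenberg

open Heisenberg

theorem centralizer_of_nonvertical_translation_general {m : ℕ}
    (τ : Fin m → ℂ) (hτ : τ ≠ 0) (t : ℝ)
    (S : Matrix (Idx m) (Idx m) ℂ) (hS : InU2 S) :
    S * Htr τ t = Htr τ t * S ↔
      ∃ (μ : ℂ) (V : Matrix (Fin m) (Fin m) ℂ) (σ : Fin m → ℂ) (s : ℝ),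
        ‖μ‖ = 1 ∧ V ∈ Matrix.unitaryGroup (Fin m) ℂ ∧ V.mulVec τ = τ ∧
          (dotc τ σ).im = 0 ∧ S = μ • (RU V * Htr σ s) := by
  constructor
  · intro hc
    set a := S (Sum.inl ()) (Sum.inl ())
    obtain ⟨he1, helast⟩ :=
      mulVec_e1_and_elast_vecMul_of_commute_single (commute_single_of_commute_Htr hτ hc)
    have ha : conj a * a = 1 := conj_mul_self_eq_one_of_mulVec_e1 hS.2 he1 helast
    obtain ⟨V, σ, s, hV, hS₀⟩ := exists_eq_RU_mul_Htr (g := conj a • S)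
      (by rw [conjTranspose_smul, Matrix.smul_mul, Matrix.smul_mul, Matrix.mul_smul, smul_smul,
        star_def, conj_conj, mul_comm, ha, one_smul, hS.2])
      (by rw [smul_mulVec, he1, smul_smul, ha, one_smul])
      (by rw [vecMul_smul, helast, smul_smul, ha, one_smul])
    obtain ⟨hVτ, hIm⟩ :=
      (commute_RU_mul_Htr_iff hV σ τ s t).1 (hS₀ ▸ (show Commute S _ from hc).smul_left (conj a))
    refine ⟨a, V, σ, s, ?_, hV, hVτ, hIm, ?_⟩
    · have : ‖a‖ ^ 2 = 1 := by exact_mod_cast (conj_mul' a).symm.trans ha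
      exact (pow_eq_one_iff_of_nonneg (norm_nonneg a) two_ne_zero).1 this
    · rw [← hS₀, smul_smul, mul_comm, ha, one_smul]
  · rintro ⟨μ, V, σ, s, -, hV, hVτ, hIm, rfl⟩
    exact (((commute_RU_mul_Htr_iff hV σ τ s t).2 ⟨hVτ, hIm⟩).smul_left μ).eq

theorem centralizer_of_nonvertical_translation {m : ℕ} (hm : 1 ≤ m)
    (τ : Fin m → ℂ) (hτ : τ ≠ 0) (t : ℝ)
    (S : Matrix (Idx m) (Idx m) ℂ) (hS : InU2 S) :
    S * Htr τ t = Htr τ t * S ↔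
      ∃ (μ : ℂ) (V : Matrix (Fin m) (Fin m) ℂ) (σ : Fin m → ℂ) (s : ℝ),
        ‖μ‖ = 1 ∧ V ∈ Matrix.unitaryGroup (Fin m) ℂ ∧ V.mulVec τ = τ ∧
          (dotc τ σ).im = 0 ∧ S = μ • (RU V * Htr σ s) :=
  centralizer_of_nonvertical_translation_general τ hτ t S hS
end

section
/- Let n ≥ 3. Let U, U′ ∈ U(n−1) be unitary, τ ∈ ℂ^{n−1} with τ ≠ 0 and Uτ = τ, and t, t′ ∈ ℝ. Then the screw parabolic R_U T_{(τ,t)} is not conjugate in U(n,1) to R_{U′} T_{(0,t′)}: there is no g ∈ U(n,1) with g · (R_U T_{(τ,t)}) · g⁻¹ = R_{U′} T_{(0,t′)}. -/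
open Matrix Complex

/-!
Write `N = M - 1` for a parabolic `M`. For the screw parabolic `M = R_U T_{(τ,t)}` with
`Uτ = τ` one has `N² e_{n+1} = -|τ|² e₁ ≠ 0` but `N³ e_{n+1} = 0`. For `M' = R_{U'} T_{(0,t')}`,
`N'` acts as `(x, v, y) ↦ (i t' y / 2, (U' - 1) v, 0)`, so `N'^k` acts as `(U' - 1)^k` for
`k ≥ 2`, and `U' - 1` is normal; hence `ker N'³ = ker N'²`. Conjugation in `GL` would carry
`e_{n+1}` to a vector violating this.
-/

open scoped ComplexOrder

section

variable {n R : Type*} [Fintype n] [DecidableEq n]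

theorem Matrix.sq_mulVec_eq_zero_iff_of_isStarNormal [PartialOrder R] [Ring R] [StarRing R]
    [StarOrderedRing R] [NoZeroDivisors R] {B : Matrix n n R} [hB : IsStarNormal B]
    {v : n → R} : B ^ 2 *ᵥ v = 0 ↔ B *ᵥ v = 0 := by
  refine ⟨fun h => ?_, fun h => by rw [sq, ← mulVec_mulVec, h, mulVec_zero]⟩
  have hnormal : Bᴴ * B = B * Bᴴ := hB.star_comm_self.eq
  have hsq : (Bᴴ * B)ᴴ * (Bᴴ * B) = Bᴴ * Bᴴ * B ^ 2 := by
    rw [conjTranspose_mul, conjTranspose_conjTranspose, Matrix.mul_assoc, ← Matrix.mul_assoc B,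
      ← hnormal, sq]
    simp only [Matrix.mul_assoc]
  have hC : ((Bᴴ * B)ᴴ * (Bᴴ * B)) *ᵥ v = 0 := by
    rw [hsq, ← mulVec_mulVec, h, mulVec_zero]
  rwa [conjTranspose_mul_self_mulVec_eq_zero, conjTranspose_mul_self_mulVec_eq_zero] at hC

theorem Matrix.pow_mulVec_eq_zero_of_semiconjBy [Field R] {g A A' : Matrix n n R}
    (hg : IsUnit g) (h : SemiconjBy g A A') {k l : ℕ}
    (hA' : ∀ w, A' ^ k *ᵥ w = 0 → A' ^ l *ᵥ w = 0) {v : n → R} (hv : A ^ k *ᵥ v = 0) :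
    A ^ l *ᵥ v = 0 := by
  have hpow (j : ℕ) : A' ^ j *ᵥ (g *ᵥ v) = g *ᵥ (A ^ j *ᵥ v) := by
    rw [mulVec_mulVec, mulVec_mulVec, (h.pow_right j).eq]
  apply mulVec_injective_iff_isUnit.mpr hg
  rw [← hpow, mulVec_zero]
  exact hA' _ (by rw [hpow, hv, mulVec_zero])

end

section

variable {m : ℕ}

def blockVec {α : Type*} (x : α) (v : Fin m → α) (y : α) : Idx m → α :=
  Sum.elim (fun _ => x) (Sum.elim v fun _ => y)

theorem blockVec_eta {α : Type*} (w : Idx m → α) :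
    blockVec (w (.inl ())) (fun k => w (.inr (.inl k))) (w (.inr (.inr ()))) = w := by
  funext i
  rcases i with ⟨⟩ | k | ⟨⟩ <;> rfl

theorem blockVec_eq_zero_iff {α : Type*} [Zero α] {x y : α} {v : Fin m → α} :
    blockVec x v y = 0 ↔ x = 0 ∧ v = 0 ∧ y = 0 := by
  simp only [blockVec, funext_iff, Sum.forall, Sum.elim_inl, Sum.elim_inr, Pi.zero_apply,
    forall_const]

theorem blockVec_sub {α : Type*} [Sub α] (x x' y y' : α) (v v' : Fin m → α) :
    blockVec x v y - blockVec x' v' y' = blockVec (x - x') (v - v') (y - y') := by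
  funext i
  rcases i with ⟨⟩ | k | ⟨⟩ <;> rfl

theorem RU_mulVec_blockVec (U : Matrix (Fin m) (Fin m) ℂ) (x y : ℂ) (v : Fin m → ℂ) :
    RU U *ᵥ blockVec x v y = blockVec x (U *ᵥ v) y := by
  funext i
  rcases i with ⟨⟩ | k | ⟨⟩ <;>
    simp [RU, blockVec, mulVec, dotProduct, Fintype.sum_sum_type]

theorem Htr_mulVec_blockVec (τ : Fin m → ℂ) (t : ℝ) (x y : ℂ) (v : Fin m → ℂ) :
    Htr τ t *ᵥ blockVec x v y =
      blockVec (x - star τ ⬝ᵥ v + (-(∑ k, normSq (τ k) : ℝ) + t * I) / 2 * y)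
        (v + y • τ) y := by
  funext i
  rcases i with ⟨⟩ | k | ⟨⟩ <;>
    simp [Htr, blockVec, mulVec, dotProduct, Fintype.sum_sum_type] <;> ring

theorem RU_mul_Htr_sub_one_mulVec_blockVec {U : Matrix (Fin m) (Fin m) ℂ} {τ : Fin m → ℂ}
    (hUτ : U *ᵥ τ = τ) (t : ℝ) (x y : ℂ) (v : Fin m → ℂ) :
    (RU U * Htr τ t - 1) *ᵥ blockVec x v y =
      blockVec ((-(∑ k, normSq (τ k) : ℝ) + t * I) / 2 * y - star τ ⬝ᵥ v)
        ((U - 1) *ᵥ v + y • τ) 0 := by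
  rw [sub_mulVec, one_mulVec, ← mulVec_mulVec, Htr_mulVec_blockVec, RU_mulVec_blockVec,
    blockVec_sub, mulVec_add, mulVec_smul, hUτ, sub_mulVec, one_mulVec]
  congr 1
  · ring
  · abel
  · ring

theorem RU_mul_Htr_zero_sub_one_pow_mulVec_blockVec (U : Matrix (Fin m) (Fin m) ℂ) (t : ℝ)
    (x y : ℂ) (v : Fin m → ℂ) (k : ℕ) :
    (RU U * Htr 0 t - 1) ^ (k + 2) *ᵥ blockVec x v y =
      blockVec 0 ((U - 1) ^ (k + 2) *ᵥ v) 0 := by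
  have hstep (x y : ℂ) (v : Fin m → ℂ) :
      (RU U * Htr 0 t - 1) *ᵥ blockVec x v y = blockVec (t * I / 2 * y) ((U - 1) *ᵥ v) 0 := by
    rw [RU_mul_Htr_sub_one_mulVec_blockVec (mulVec_zero U)]
    simp
  induction k with
  | zero => rw [sq, ← mulVec_mulVec, hstep, hstep, mul_zero, mulVec_mulVec, sq]
  | succ k ih =>
    rw [pow_succ', ← mulVec_mulVec, ih, hstep, mul_zero, mulVec_mulVec, ← pow_succ']

theorem RU_mul_Htr_zero_sub_one_sq_mulVec_eq_zero_of_pow_three {U : Matrix (Fin m) (Fin m) ℂ}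
    [IsStarNormal U] (t : ℝ) (w : Idx m → ℂ)
    (hw : (RU U * Htr 0 t - 1) ^ 3 *ᵥ w = 0) : (RU U * Htr 0 t - 1) ^ 2 *ᵥ w = 0 := by
  have hcomm : Commute U (star 1) := by rw [star_one]; exact Commute.one_right U
  have : IsStarNormal (U - 1) := hcomm.isStarNormal_sub
  rw [← blockVec_eta w] at hw ⊢
  rw [RU_mul_Htr_zero_sub_one_pow_mulVec_blockVec U t _ _ _ 1, blockVec_eq_zero_iff] at hw
  rw [RU_mul_Htr_zero_sub_one_pow_mulVec_blockVec U t _ _ _ 0, blockVec_eq_zero_iff]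
  refine ⟨rfl, ?_, rfl⟩
  rw [pow_succ, ← mulVec_mulVec, sq_mulVec_eq_zero_iff_of_isStarNormal, mulVec_mulVec] at hw
  rw [zero_add, sq]
  exact hw.2.1

theorem RU_mul_Htr_sub_one_pow_three_mulVec_blockVec {U : Matrix (Fin m) (Fin m) ℂ}
    {τ : Fin m → ℂ} (hUτ : U *ᵥ τ = τ) (t : ℝ) :
    (RU U * Htr τ t - 1) ^ 3 *ᵥ blockVec 0 0 1 = 0 := by
  simp only [pow_succ, ← mulVec_mulVec, pow_zero, one_mulVec,
    RU_mul_Htr_sub_one_mulVec_blockVec hUτ]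
  simp [sub_mulVec, hUτ, blockVec_eq_zero_iff]

theorem RU_mul_Htr_sub_one_sq_mulVec_blockVec_ne_zero {U : Matrix (Fin m) (Fin m) ℂ}
    {τ : Fin m → ℂ} (hτ : τ ≠ 0) (hUτ : U *ᵥ τ = τ) (t : ℝ) :
    (RU U * Htr τ t - 1) ^ 2 *ᵥ blockVec 0 0 1 ≠ 0 := by
  simp only [sq, ← mulVec_mulVec, RU_mul_Htr_sub_one_mulVec_blockVec hUτ]
  simpa [sub_mulVec, hUτ, blockVec_eq_zero_iff, dotProduct_star_self_eq_zero] using hτ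

end

theorem screw_parabolic_types_not_conjugate_general {m : ℕ}
    (U U' : Matrix (Fin m) (Fin m) ℂ)
    (hU' : U' ∈ Matrix.unitaryGroup (Fin m) ℂ)
    (τ : Fin m → ℂ) (hτ0 : τ ≠ 0) (hUτ : U.mulVec τ = τ) (t t' : ℝ) :
    ¬ ∃ g : Matrix (Idx m) (Idx m) ℂ, InU2 g ∧
        g * (RU U * Htr τ t) * g⁻¹ = RU U' * Htr (0 : Fin m → ℂ) t' := by
  rintro ⟨g, ⟨hg, -⟩, hconj⟩
  have : IsStarNormal U' := isStarNormal_of_mem_unitary hU'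
  have hsemi : SemiconjBy g (RU U * Htr τ t - 1) (RU U' * Htr 0 t' - 1) := by
    refine SemiconjBy.sub_right ?_ (SemiconjBy.one_right g)
    rw [SemiconjBy, ← hconj,
      nonsing_inv_mul_cancel_right (h := (isUnit_iff_isUnit_det g).mp hg)]
  exact RU_mul_Htr_sub_one_sq_mulVec_blockVec_ne_zero hτ0 hUτ t <|
    pow_mulVec_eq_zero_of_semiconjBy hg hsemi
      (RU_mul_Htr_zero_sub_one_sq_mulVec_eq_zero_of_pow_three t')
      (RU_mul_Htr_sub_one_pow_three_mulVec_blockVec hUτ t)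

theorem screw_parabolic_types_not_conjugate {m : ℕ} (hm : 2 ≤ m)
    (U U' : Matrix (Fin m) (Fin m) ℂ)
    (hU : U ∈ Matrix.unitaryGroup (Fin m) ℂ) (hU' : U' ∈ Matrix.unitaryGroup (Fin m) ℂ)
    (τ : Fin m → ℂ) (hτ0 : τ ≠ 0) (hUτ : U.mulVec τ = τ) (t t' : ℝ) :
    ¬ ∃ g : Matrix (Idx m) (Idx m) ℂ, InU2 g ∧
        g * (RU U * Htr τ t) * g⁻¹ = RU U' * Htr (0 : Fin m → ℂ) t' :=
  screw_parabolic_types_not_conjugate_general U U' hU' τ hτ0 hUτ t t'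
end
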